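/- arXiv:0906.4382 — 3 statements merged into one kernel-verified Lean document; each statement's English description precedes it below -/
import Mathlib

section
/- Let A be a C*-algebra, let X and Y be Hilbert A-modules, and let I be a closed two-sided ideal in A. Then: (i) every adjointable operator a ∈ L(XI,Y) takes its values in YI and, regarded as a map XI → YI, is adjointable, so L(XI,Y) ⊆ L(XI,YI); (ii) the restriction map a ↦ a|_{XI} from L(X,YI) to L(XI,YI) is an injective homomorphism; (iii) for a ∈ L(X,YI), the restriction a|_{XI} : XI → Y is adjointable (i.e. a|_{XI} ∈ L(XI,Y)) if and only if a, viewed as a map from X to Y, is adjointable (i.e. a ∈ L(X,Y)). -/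
noncomputable section

section StarMemAux

private lemma aux_real_bound (δ : ℝ) (hδ : 0 < δ) (s : ℝ) :
    |(1 - s * (s / (s^2 + δ))) * (s * (1 - s * (s / (s^2 + δ))))| ≤ Real.sqrt δ := by
  have hd : (0:ℝ) < s^2 + δ := by positivity
  have h1 : 1 - s * (s / (s^2+δ)) = δ / (s^2+δ) := by field_simp; ring
  rw [h1]
  have hE : δ / (s^2+δ) * (s * (δ / (s^2+δ))) = δ^2 * s / (s^2+δ)^2 := by
    field_simp
  rw [hE]
  have hsq : Real.sqrt δ ^ 2 = δ := Real.sq_sqrt hδ.le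
  have hsqpos : 0 < Real.sqrt δ := Real.sqrt_pos.mpr hδ
  rw [abs_div, abs_of_pos (by positivity : (0:ℝ) < (s^2+δ)^2), abs_mul,
    abs_of_pos (by positivity : (0:ℝ) < δ^2), div_le_iff₀ (by positivity)]
  rcases le_or_gt |s| (Real.sqrt δ) with hs | hs
  · have h2 : s^2 ≤ δ := by
      nlinarith [mul_self_le_mul_self (abs_nonneg s) hs, sq_abs s]
    have h4 : δ^2 * |s| ≤ δ^2 * Real.sqrt δ :=
      mul_le_mul_of_nonneg_left hs (by positivity)
    have h5 : δ^2 ≤ (s^2+δ)^2 := by nlinarith [sq_nonneg s]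
    calc δ^2 * |s| ≤ δ^2 * Real.sqrt δ := h4
      _ = Real.sqrt δ * δ^2 := by ring
      _ ≤ Real.sqrt δ * (s^2+δ)^2 := mul_le_mul_of_nonneg_left h5 hsqpos.le
  · have h3 : δ^2 ≤ Real.sqrt δ * |s|^3 := by
      have := pow_le_pow_left₀ hsqpos.le hs.le 3
      nlinarith
    have h6 : (s^2)^2 ≤ (s^2+δ)^2 := by nlinarith [sq_nonneg s]
    calc δ^2 * |s| ≤ (Real.sqrt δ * |s|^3) * |s| :=
          mul_le_mul_of_nonneg_right h3 (abs_nonneg s)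
      _ = Real.sqrt δ * (s^2)^2 := by
          rw [mul_assoc, show |s|^3 * |s| = (|s|^2)^2 by ring, sq_abs]
      _ ≤ Real.sqrt δ * (s^2+δ)^2 := mul_le_mul_of_nonneg_left h6 hsqpos.le


variable {A : Type} [NonUnitalCStarAlgebra A]

open Unitization in
private lemma star_mem_of_mem (I : Submodule ℂ A) (hIclosed : IsClosed (I : Set A))
    (hIl : ∀ a : A, ∀ b ∈ I, a * b ∈ I) (hIr : ∀ a : A, ∀ b ∈ I, b * a ∈ I)
    {b : A} (hb : b ∈ I) : star b ∈ I := by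
  have key : star b ∈ closure (I : Set A) := by
    rw [Metric.mem_closure_iff]
    intro ε hε
    set t : A := b * star b with ht_def
    have ht : t ∈ I := hIr (star b) b hb
    have hsa_t : IsSelfAdjoint t := by
      rw [IsSelfAdjoint, ht_def, star_mul, star_star]
    set T : Unitization ℂ A := (t : Unitization ℂ A) with hT_def
    have hT : IsSelfAdjoint T := by
      rw [IsSelfAdjoint, hT_def, ← Unitization.inr_star, hsa_t.star_eq]
    set δ : ℝ := (ε^2/2)^2 with hδ_def
    have hδ : 0 < δ := by positivity
    have hsqrtδ : Real.sqrt δ = ε^2/2 := Real.sqrt_sq (by positivity)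
    set k : ℝ → ℝ := fun s => s / (s^2 + δ) with hk_def
    have hkc : Continuous k := by
      apply Continuous.div continuous_id (by continuity)
      intro s; positivity
    set g : ℝ → ℝ := fun s => 1 - s * k s with hg_def
    have hgc : Continuous g := by continuity
    set u : Unitization ℂ A := cfc k T with hu_def
    set c : Unitization ℂ A := cfc (fun s : ℝ => s * k s) T with hc_def
    have hc : c = T * u := by
      rw [hc_def, hu_def, cfc_mul (fun s : ℝ => s) k T (by fun_prop) hkc.continuousOn,
        cfc_id' ℝ T]
    set d₀ : A := u.fst • t + t * u.snd with hd₀_def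
    have hd₀ : d₀ ∈ I := I.add_mem (I.smul_mem _ ht) (hIr u.snd t ht)
    have hTu : T * u = (d₀ : Unitization ℂ A) := by
      conv_lhs => rw [← Unitization.inl_fst_add_inr_snd_eq u]
      rw [mul_add, hT_def, Unitization.inr_mul_inl, ← Unitization.inr_mul, hd₀_def,
        Unitization.inr_add]
    have hcd₀ : c = (d₀ : Unitization ℂ A) := hc.trans hTu
    set d : A := star b * d₀ with hd_def
    have hd : d ∈ I := hIl (star b) d₀ hd₀
    refine ⟨d, hd, ?_⟩
    rw [dist_eq_norm, ← Unitization.norm_inr (𝕜 := ℂ)]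
    have hX : ((star b - d : A) : Unitization ℂ A)
        = (star b : Unitization ℂ A) * (1 - c) := by
      rw [hd_def, Unitization.inr_sub, Unitization.inr_mul, Unitization.inr_star, mul_sub,
        mul_one, hcd₀]
    rw [hX]
    set Xel : Unitization ℂ A := (star b : Unitization ℂ A) * (1 - c) with hXel_def
    have hcsa : IsSelfAdjoint c := cfc_predicate _ T
    have h1c : cfc g T = 1 - c := by
      rw [hg_def, hc_def, cfc_sub (fun _ : ℝ => 1) (fun s : ℝ => s * k s) T (by fun_prop)
        (by fun_prop), cfc_const_one ℝ T]
    have hstarX : star Xel = (1 - c) * (b : Unitization ℂ A) := by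
      rw [hXel_def, star_mul, star_sub, star_one, hcsa.star_eq, star_star]
    have hXX : star Xel * Xel = (1 - c) * T * (1 - c) := by
      rw [hstarX, hXel_def, hT_def, ht_def, Unitization.inr_mul, Unitization.inr_star]
      simp [mul_assoc]
    have hcfcF : (1 - c) * T * (1 - c) = cfc (fun s : ℝ => g s * (s * g s)) T := by
      rw [cfc_mul g (fun s : ℝ => s * g s) T hgc.continuousOn (by fun_prop),
        cfc_mul (fun s : ℝ => s) g T (by fun_prop) hgc.continuousOn, cfc_id' ℝ T, h1c,
        mul_assoc]
    have hnorm : ‖cfc (fun s : ℝ => g s * (s * g s)) T‖ ≤ Real.sqrt δ := by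
      refine norm_cfc_le (Real.sqrt_nonneg δ) fun s _ => ?_
      rw [Real.norm_eq_abs]
      exact aux_real_bound δ hδ s
    have hXsq : ‖Xel‖ * ‖Xel‖ ≤ ε^2/2 := by
      rw [← CStarRing.norm_star_mul_self, hXX, hcfcF]
      rw [← hsqrtδ]; exact hnorm
    have : ‖Xel‖^2 < ε^2 := by nlinarith
    exact lt_of_pow_lt_pow_left₀ 2 hε.le this
  rwa [hIclosed.closure_eq] at key


end StarMemAux

open scoped RightActions

/-- The Hilbert C⋆-module class as it stood in the older Mathlib (right `A`-action via `Aᵐᵒᵖ`,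
inner product `A`-linear on the right in the second variable); Mathlib's `CStarModule` now uses
a left action `[SMul A E]` with `inner x (a • y) = a * inner x y`. -/
class CStarModuleOld (A E : Type*) [NonUnitalSemiring A] [StarRing A] [Module ℂ A]
    [AddCommGroup E] [Module ℂ E] [PartialOrder A] [SMul Aᵐᵒᵖ E] [Norm A] [Norm E]
    extends Inner A E where
  inner_add_right {x} {y} {z} : inner x (y + z) = inner x y + inner x z
  inner_self_nonneg {x} : 0 ≤ inner x x
  inner_self {x} : inner x x = 0 ↔ x = 0
  inner_op_smul_right {a : A} {x y : E} : inner x (y <• a) = inner x y * a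
  inner_smul_right_complex {z : ℂ} {x} {y} : inner x (z • y) = z • inner x y
  star_inner x y : star (inner x y) = inner y x
  norm_eq_sqrt_norm_inner_self x : ‖x‖ = Real.sqrt ‖inner x x‖

section CStarModuleOldAux
variable {A E : Type*} [NonUnitalRing A] [StarRing A] [Module ℂ A]
    [AddCommGroup E] [Module ℂ E] [PartialOrder A] [SMul Aᵐᵒᵖ E] [Norm A] [Norm E]
    [CStarModuleOld A E]

@[simp]
theorem CStarModuleOld.inner_zero_right {x : E} : inner A x (0 : E) = 0 := by
  have h := CStarModuleOld.inner_add_right (A := A) (x := x) (y := (0 : E)) (z := 0)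
  rw [add_zero] at h
  exact add_left_cancel (h.symm.trans (add_zero _).symm)

theorem CStarModuleOld.inner_neg_right {x y : E} : inner A x (-y) = -inner A x y := by
  have h := CStarModuleOld.inner_add_right (A := A) (x := x) (y := y) (z := -y)
  rw [add_neg_cancel, CStarModuleOld.inner_zero_right] at h
  exact (neg_eq_of_add_eq_zero_right h.symm).symm

theorem CStarModuleOld.inner_sub_right {x y z : E} :
    inner A x (y - z) = inner A x y - inner A x z := by
  rw [sub_eq_add_neg, CStarModuleOld.inner_add_right, CStarModuleOld.inner_neg_right,
    ← sub_eq_add_neg]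

@[simp]
theorem CStarModuleOld.inner_zero_left {y : E} : inner A (0 : E) y = 0 := by
  rw [← CStarModuleOld.star_inner (A := A) y, CStarModuleOld.inner_zero_right, star_zero]

theorem CStarModuleOld.inner_sub_left {x y z : E} :
    inner A (x - y) z = inner A x z - inner A y z := by
  rw [← CStarModuleOld.star_inner (A := A) z, CStarModuleOld.inner_sub_right, star_sub,
    CStarModuleOld.star_inner, CStarModuleOld.star_inner]

theorem CStarModuleOld.inner_op_smul_left {a : A} {x y : E} :
    inner A (x <• a) y = star a * inner A x y := by
  rw [← CStarModuleOld.star_inner (A := A) y, CStarModuleOld.inner_op_smul_right, star_mul,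
    CStarModuleOld.star_inner]

end CStarModuleOldAux

variable {A : Type} [NonUnitalCStarAlgebra A] [PartialOrder A] [StarOrderedRing A]

/-- For a Hilbert `A`-module `X` and an ideal `I` of `A`, the submodule
`XI = {x ∈ X : ⟨x,y⟩_A ∈ I for all y ∈ X}`. -/
def idealSub (I : Submodule ℂ A) (X : Type) [NormedAddCommGroup X] [Module ℂ X]
    [SMul Aᵐᵒᵖ X] [CStarModuleOld A X] : Set X :=
  {x : X | ∀ y : X, (inner A x y : A) ∈ I}

variable {X : Type} [NormedAddCommGroup X] [Module ℂ X] [SMul Aᵐᵒᵖ X] [CStarModuleOld A X]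
variable {Y : Type} [NormedAddCommGroup Y] [Module ℂ Y] [SMul Aᵐᵒᵖ Y] [CStarModuleOld A Y]

/-- `f : X → Y` is, by restriction, an adjointable operator from the subset `S ⊆ X`
to the subset `T' ⊆ Y`: it maps `S` into `T'` and there is `g : Y → X` mapping `T'`
into `S` with `⟨f x, y⟩_A = ⟨x, g y⟩_A` for `x ∈ S`, `y ∈ T'`.
(Values of `f` outside `S`, and of `g` outside `T'`, are irrelevant.) -/
def AdjOn (S : Set X) (T' : Set Y) (f : X → Y) : Prop :=
  (∀ x ∈ S, f x ∈ T') ∧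
    ∃ g : Y → X, (∀ y ∈ T', g y ∈ S) ∧
      ∀ x ∈ S, ∀ y ∈ T', (inner A (f x) y : A) = inner A x (g y)

/-- Let `I` be a closed two-sided ideal in the C*-algebra `A` and let
`X`, `Y` be Hilbert `A`-modules.  Then:
(i) every adjointable operator `XI → Y` takes values in `YI` and is adjointable as an
operator `XI → YI` (so `L(XI,Y) ⊆ L(XI,YI)`);
(ii) restriction gives a well-defined injective map `L(X,YI) → L(XI,YI)`;
(iii) for `a ∈ L(X,YI)`, the restriction `a|XI : XI → Y` is adjointable iff `a : X → Y`
is adjointable. -/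
theorem adjointable_ideal_sub (I : Submodule ℂ A)
    (hIclosed : IsClosed (I : Set A))
    (hIl : ∀ a : A, ∀ b ∈ I, a * b ∈ I) (hIr : ∀ a : A, ∀ b ∈ I, b * a ∈ I)
    [CompleteSpace X] [CompleteSpace Y] :
    -- (i)
    (∀ f : X → Y, AdjOn (A := A) (idealSub I X) Set.univ f →
      (∀ x ∈ idealSub I X, f x ∈ idealSub I Y) ∧
        AdjOn (A := A) (idealSub I X) (idealSub I Y) f) ∧
    -- (ii) restriction maps `L(X,YI)` into `L(XI,YI)` ...
    (∀ f : X → Y, AdjOn (A := A) Set.univ (idealSub I Y) f →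
      AdjOn (A := A) (idealSub I X) (idealSub I Y) f) ∧
    -- ... and is injective
    (∀ f₁ f₂ : X → Y, AdjOn (A := A) Set.univ (idealSub I Y) f₁ →
      AdjOn (A := A) Set.univ (idealSub I Y) f₂ →
      (∀ x ∈ idealSub I X, f₁ x = f₂ x) → f₁ = f₂) ∧
    -- (iii)
    (∀ f : X → Y, AdjOn (A := A) Set.univ (idealSub I Y) f →
      (AdjOn (A := A) (idealSub I X) Set.univ f ↔ AdjOn (A := A) Set.univ Set.univ f)) := by
  have hstar : ∀ b ∈ I, star b ∈ I := fun b hb => star_mem_of_mem I hIclosed hIl hIr hb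
  refine ⟨?_, ?_, ?_, ?_⟩
  -- (i)
  · rintro f ⟨hmaps, g, hg, hadj⟩
    have hval : ∀ x ∈ idealSub I X, f x ∈ idealSub I Y := by
      intro x hx y
      rw [hadj x hx y (Set.mem_univ y)]
      exact hx (g y)
    exact ⟨hval, hval, g, fun y _ => hg y (Set.mem_univ y),
      fun x hx y _ => hadj x hx y (Set.mem_univ y)⟩
  -- (ii) well-defined
  · rintro f ⟨hmaps, g, hg, hadj⟩
    refine ⟨fun x _ => hmaps x (Set.mem_univ x), g, ?_,
      fun x _ y hy => hadj x (Set.mem_univ x) y hy⟩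
    intro y hy z
    have : (inner A (g y) z : A) = inner A y (f z) := by
      rw [← CStarModuleOld.star_inner z, ← hadj z (Set.mem_univ z) y hy, CStarModuleOld.star_inner]
    rw [this]
    exact hy (f z)
  -- (ii) injective
  · rintro f₁ f₂ ⟨hm₁, g₁, hg₁, ha₁⟩ ⟨hm₂, g₂, hg₂, ha₂⟩ heq
    funext x
    have hDY : ∀ z : X, f₁ z - f₂ z ∈ idealSub I Y := by
      intro z w
      rw [CStarModuleOld.inner_sub_left]
      exact I.sub_mem (hm₁ z (Set.mem_univ z) w) (hm₂ z (Set.mem_univ z) w)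
    have hadjD : ∀ z : X, ∀ y ∈ idealSub I Y,
        (inner A (f₁ z - f₂ z) y : A) = inner A z (g₁ y - g₂ y) := by
      intro z y hy
      rw [CStarModuleOld.inner_sub_left, CStarModuleOld.inner_sub_right, ha₁ z (Set.mem_univ z) y hy,
        ha₂ z (Set.mem_univ z) y hy]
    have hG : ∀ y ∈ idealSub I Y, g₁ y - g₂ y ∈ idealSub I X := by
      intro y hy z
      have : (inner A (g₁ y - g₂ y) z : A) = inner A y (f₁ z - f₂ z) := by
        rw [← CStarModuleOld.star_inner z, ← hadjD z y hy, CStarModuleOld.star_inner]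
      rw [this]
      exact hy (f₁ z - f₂ z)
    set w : X := g₁ (f₁ x - f₂ x) - g₂ (f₁ x - f₂ x) with hw_def
    have hwXI : w ∈ idealSub I X := hG _ (hDY x)
    have hDw : f₁ w - f₂ w = 0 := by rw [heq w hwXI, sub_self]
    have hww : (inner A w w : A) = 0 := by
      have h := hadjD w (f₁ x - f₂ x) (hDY x)
      rw [hDw, ← hw_def] at h
      simpa using h.symm
    have hw0 : w = 0 := CStarModuleOld.inner_self.mp hww
    have hDx : (inner A (f₁ x - f₂ x) (f₁ x - f₂ x) : A) = 0 := by
      rw [hadjD x _ (hDY x), ← hw_def, hw0, CStarModuleOld.inner_zero_right]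
    have := CStarModuleOld.inner_self.mp hDx
    exact sub_eq_zero.mp this
  -- (iii)
  · rintro f ⟨hm, g, hg, ha⟩
    -- module linearity of f with respect to the right action
    have hYIsmul : ∀ m : Y, m ∈ idealSub I Y → ∀ e : A, m <• e ∈ idealSub I Y := by
      intro m hm' e z
      rw [CStarModuleOld.inner_op_smul_left]
      exact hIl (star e) _ (hm' z)
    have hlin : ∀ (x : X) (e : A), f (x <• e) = f x <• e := by
      intro x e
      have hδY : f (x <• e) - f x <• e ∈ idealSub I Y := by
        intro z
        rw [CStarModuleOld.inner_sub_left]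
        exact I.sub_mem (hm _ (Set.mem_univ _) z) (hYIsmul _ (hm x (Set.mem_univ x)) e z)
      have hδ0 : ∀ y ∈ idealSub I Y, (inner A (f (x <• e) - f x <• e) y : A) = 0 := by
        intro y hy
        rw [CStarModuleOld.inner_sub_left, ha _ (Set.mem_univ _) y hy, CStarModuleOld.inner_op_smul_left,
          CStarModuleOld.inner_op_smul_left, ha x (Set.mem_univ x) y hy, sub_self]
      have := hδ0 _ hδY
      exact sub_eq_zero.mp (CStarModuleOld.inner_self.mp this)
    constructor
    · rintro ⟨_, g', hg', ha'⟩
      refine ⟨fun _ _ => Set.mem_univ _, g', fun _ _ => Set.mem_univ _, ?_⟩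
      intro x _ y _
      set t : A := inner A (f x) y with ht_def
      set s : A := inner A x (g' y) with hs_def
      have htI : t ∈ I := hm x (Set.mem_univ x) y
      have hsI : s ∈ I := by
        have : s = star (inner A (g' y) x : A) := by rw [CStarModuleOld.star_inner]
        rw [this]
        exact hstar _ (hg' y (Set.mem_univ y) x)
      have hkey : ∀ e ∈ I, star e * (t - s) = 0 := by
        intro e he
        have hxe : x <• e ∈ idealSub I X := by
          intro z
          rw [CStarModuleOld.inner_op_smul_left]
          exact hIr _ _ (hstar e he)
        have h1 := ha' (x <• e) hxe y (Set.mem_univ y)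
        rw [hlin x e, CStarModuleOld.inner_op_smul_left, CStarModuleOld.inner_op_smul_left, ← ht_def, ← hs_def] at h1
        rw [mul_sub, h1, sub_self]
      have := hkey (t - s) (I.sub_mem htI hsI)
      have h0 : t - s = 0 := by
        have := CStarRing.star_mul_self_eq_zero_iff (t - s) |>.mp this
        exact this
      have := sub_eq_zero.mp h0
      rw [ht_def, hs_def] at this
      exact this
    · rintro ⟨_, h, _, hah⟩
      refine ⟨fun _ _ => Set.mem_univ _, h, ?_, fun x _ y _ => hah x (Set.mem_univ x) y (Set.mem_univ y)⟩
      intro y _ z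
      have : (inner A (h y) z : A) = star (inner A (f z) y : A) := by
        rw [hah z (Set.mem_univ z) y (Set.mem_univ y), CStarModuleOld.star_inner]
      rw [this]
      exact hstar _ (hm z (Set.mem_univ z) y)

end
end

section
/- Let K be an ideal in a right tensor C*-precategory T and let π = {π_nm} be a right tensor representation of K in a C*-algebra B. Then the family of sets J(m,n) := {a ∈ J(K)(m,n) : π_nm(a) = π_{n+1,m+1}(a⊗1)} is an ideal in J(K). Moreover, J ∩ ker(⊗1) ⊆ ker π and ker π ∩ J(K) ⊆ J. In particular, if π is faithful, then J ∩ ker(⊗1) = {0}, i.e. J ⊆ (ker ⊗1)^⊥. -/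
noncomputable section

open Filter Topology Metric

/-- A C*-precategory with class of objects `Obj`: a family of complex Banach spaces
`Hom σ ρ` (the morphisms `T(σ,ρ)`), a submultiplicative associative bilinear composition,
and an antilinear involutive contravariant star satisfying the C*-equality. -/
structure CstarPrecat (Obj : Type) where
  Hom : Obj → Obj → Type
  [ng : ∀ σ ρ, NormedAddCommGroup (Hom σ ρ)]
  [ns : ∀ σ ρ, NormedSpace ℂ (Hom σ ρ)]
  [cs : ∀ σ ρ, CompleteSpace (Hom σ ρ)]
  comp : ∀ {σ ρ τ}, Hom σ ρ → Hom τ σ → Hom τ ρ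
  star' : ∀ {σ ρ}, Hom σ ρ → Hom ρ σ
  comp_assoc : ∀ {σ ρ τ υ} (a : Hom σ ρ) (b : Hom τ σ) (c : Hom υ τ),
      comp (comp a b) c = comp a (comp b c)
  add_comp : ∀ {σ ρ τ} (a b : Hom σ ρ) (c : Hom τ σ), comp (a + b) c = comp a c + comp b c
  comp_add : ∀ {σ ρ τ} (a : Hom σ ρ) (b c : Hom τ σ), comp a (b + c) = comp a b + comp a c
  smul_comp : ∀ {σ ρ τ} (z : ℂ) (a : Hom σ ρ) (b : Hom τ σ), comp (z • a) b = z • comp a b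
  comp_smul : ∀ {σ ρ τ} (z : ℂ) (a : Hom σ ρ) (b : Hom τ σ), comp a (z • b) = z • comp a b
  star_add' : ∀ {σ ρ} (a b : Hom σ ρ), star' (a + b) = star' a + star' b
  star_smul' : ∀ {σ ρ} (z : ℂ) (a : Hom σ ρ), star' (z • a) = (starRingEnd ℂ z) • star' a
  star_star' : ∀ {σ ρ} (a : Hom σ ρ), star' (star' a) = a
  star_comp' : ∀ {σ ρ τ} (a : Hom σ ρ) (b : Hom τ σ),
      star' (comp a b) = comp (star' b) (star' a)
  norm_comp_le : ∀ {σ ρ τ} (a : Hom σ ρ) (b : Hom τ σ), ‖comp a b‖ ≤ ‖a‖ * ‖b‖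
  norm_star_comp_self : ∀ {σ ρ} (a : Hom σ ρ), ‖comp (star' a) a‖ = ‖a‖ ^ 2

attribute [instance] CstarPrecat.ng CstarPrecat.ns CstarPrecat.cs

/-- An ideal in a C*-precategory: a family of closed subspaces absorbing composition
on both sides. -/
structure CstarPrecat.Ideal {Obj : Type} (T : CstarPrecat Obj) where
  car : ∀ σ ρ, Submodule ℂ (T.Hom σ ρ)
  isClosed' : ∀ σ ρ, IsClosed (car σ ρ : Set (T.Hom σ ρ))
  comp_mem_left : ∀ {σ ρ τ} (a : T.Hom σ ρ) {b : T.Hom τ σ}, b ∈ car τ σ →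
      T.comp a b ∈ car τ ρ
  comp_mem_right : ∀ {σ ρ τ} (a : T.Hom σ ρ) {k : T.Hom ρ τ}, k ∈ car ρ τ →
      T.comp k a ∈ car σ τ


/-- A right tensor C*-precategory: a C*-precategory with objects `ℕ` equipped with a
right tensoring `⊗1 : T(n,m) → T(n+1,m+1)` which is linear, multiplicative and
star-preserving. -/
structure RTCP extends CstarPrecat ℕ where
  tensor : ∀ {n m : ℕ}, Hom n m → Hom (n + 1) (m + 1)
  tensor_add : ∀ {n m : ℕ} (a b : Hom n m), tensor (a + b) = tensor a + tensor b
  tensor_smul : ∀ {n m : ℕ} (z : ℂ) (a : Hom n m), tensor (z • a) = z • tensor a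
  tensor_comp : ∀ {σ ρ τ : ℕ} (a : Hom σ ρ) (b : Hom τ σ),
      tensor (comp a b) = comp (tensor a) (tensor b)
  tensor_star : ∀ {σ ρ : ℕ} (a : Hom σ ρ), tensor (star' a) = star' (tensor a)

namespace RTCP

/-- Ideals of a right tensor C*-precategory are ideals of the underlying C*-precategory. -/
abbrev Ideal (T : RTCP) := T.toCstarPrecat.Ideal

/-- The iterated right tensoring `a ↦ a ⊗ 1^k`. -/
def tensorPow (T : RTCP) : ∀ (k : ℕ) {n m : ℕ}, T.Hom n m → T.Hom (n + k) (m + k)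
  | 0, _, _, a => a
  | k + 1, _, _, a => T.tensor (T.tensorPow k a)

/-- An ideal `N` in a right tensor C*-precategory is invariant if `N ⊗ 1 ⊆ N`. -/
def Invariant (T : RTCP) (N : T.Ideal) : Prop :=
  ∀ (n m : ℕ) (a : T.Hom n m), a ∈ N.car n m → T.tensor a ∈ N.car (n + 1) (m + 1)

/-- `J ⊆ J(K)`, where `J(K)(n,m) = {a ∈ K(n,m) : a ⊗ 1 ∈ K(n+1,m+1)}`. -/
def SubJK (T : RTCP) (K J : T.Ideal) : Prop :=
  ∀ (n m : ℕ) (a : T.Hom n m), a ∈ J.car n m →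
    a ∈ K.car n m ∧ T.tensor a ∈ K.car (n + 1) (m + 1)

end RTCP

/-- A right tensor representation of an ideal `K` of a right tensor C*-precategory `T`
in a C*-algebra `B`: linear maps `π_nm : K(m,n) → B` (encoded as maps on all of
`T(m,n)` whose values are constrained only on `K`) satisfying
`π_nm(a)* = π_mn(a*)`, `π_nm(a) π_ml(b) = π_nl(ab)` and
`π_nm(a) π_{m+k,l}(b) = π_{n+k,l}((a ⊗ 1^k) b)`. -/
structure RTRep (T : RTCP) (K : T.Ideal) (B : Type) [NonUnitalCStarAlgebra B] where
  map : ∀ n m : ℕ, T.Hom m n → B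
  map_add : ∀ {n m : ℕ} {a b : T.Hom m n}, a ∈ K.car m n → b ∈ K.car m n →
      map n m (a + b) = map n m a + map n m b
  map_smul : ∀ {n m : ℕ} (z : ℂ) {a : T.Hom m n}, a ∈ K.car m n →
      map n m (z • a) = z • map n m a
  map_star : ∀ {n m : ℕ} {a : T.Hom m n}, a ∈ K.car m n →
      star (map n m a) = map m n (T.star' a)
  map_mul : ∀ {n m l : ℕ} {a : T.Hom m n} {b : T.Hom l m},
      a ∈ K.car m n → b ∈ K.car l m →
      map n m a * map m l b = map n l (T.comp a b)
  map_rt : ∀ {n m l : ℕ} (k : ℕ) {a : T.Hom m n} {b : T.Hom l (m + k)},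
      a ∈ K.car m n → b ∈ K.car l (m + k) →
      map n m a * map (m + k) l b = map (n + k) l (T.comp (T.tensorPow k a) b)

namespace RTRep

variable {T : RTCP} {K : T.Ideal} {B : Type} [NonUnitalCStarAlgebra B]

/-- A right tensor representation is coisometric on an ideal `J ⊆ J(K)` if
`π_nm(a) = π_{n+1,m+1}(a ⊗ 1)` for all `a ∈ J(m,n)`. -/
def Coiso (π : RTRep T K B) (J : T.Ideal) : Prop :=
  ∀ (n m : ℕ) (a : T.Hom m n), a ∈ J.car m n →
    π.map n m a = π.map (n + 1) (m + 1) (T.tensor a)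

/-- The representation is faithful: all the maps `π_nm` are injective on `K`. -/
def Faithful (π : RTRep T K B) : Prop :=
  ∀ n m : ℕ, Set.InjOn (π.map n m) (K.car m n)

/-- `B` is generated, as a C*-algebra, by the image of the representation:
every closed subset of `B` stable under the algebraic operations and containing
the image of `K` is all of `B`. -/
def Generates (π : RTRep T K B) : Prop :=
  ∀ S : Set B, IsClosed S →
    (∀ x ∈ S, ∀ y ∈ S, x + y ∈ S) → (∀ (z : ℂ), ∀ x ∈ S, z • x ∈ S) →
    (∀ x ∈ S, ∀ y ∈ S, x * y ∈ S) → (∀ x ∈ S, star x ∈ S) →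
    (∀ (n m : ℕ) (a : T.Hom m n), a ∈ K.car m n → π.map n m a ∈ S) →
    ∀ x : B, x ∈ S

end RTRep

/-- A bundled (possibly non-unital) C*-algebra. -/
structure CStarAlg : Type 1 where
  carrier : Type
  [inst : NonUnitalCStarAlgebra carrier]

attribute [instance] CStarAlg.inst

/-- `(O, i)` is a universal pair for `(T, K, J)`: `i` is a right tensor representation of
`K` in `O` coisometric on `J`, generating `O`, and every right tensor representation of `K`
coisometric on `J` in a C*-algebra factors through `i` via a *-homomorphism. -/
def IsUniversalPair (T : RTCP) (K J : T.Ideal) (O : CStarAlg)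
    (i : RTRep T K O.carrier) : Prop :=
  i.Coiso J ∧ i.Generates ∧
    ∀ (B : CStarAlg) (π : RTRep T K B.carrier), π.Coiso J →
      ∃ Ψ : O.carrier →⋆ₙₐ[ℂ] B.carrier,
        ∀ (n m : ℕ) (a : T.Hom m n), a ∈ K.car m n →
          Ψ (i.map n m a) = π.map n m a

/-- The set of elements of `J(K)(m,n)` on which the right tensor representation `π` is
coisometric, i.e. `{a ∈ J(K)(m,n) : π_nm(a) = π_{n+1,m+1}(a ⊗ 1)}`. -/
def RTRep.coisoSet {T : RTCP} {K : T.Ideal} {B : Type} [NonUnitalCStarAlgebra B]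
    (π : RTRep T K B) (n m : ℕ) : Set (T.Hom m n) :=
  {a | a ∈ K.car m n ∧ T.tensor a ∈ K.car (m + 1) (n + 1) ∧
    π.map n m a = π.map (n + 1) (m + 1) (T.tensor a)}


/-! ### Auxiliary development -/

namespace RTCPAux

open RTCP

/-! #### Elementary consequences of bilinearity -/

theorem comp_zero (T : RTCP) {σ ρ τ : ℕ} (a : T.Hom σ ρ) :
    T.comp a (0 : T.Hom τ σ) = 0 := by
  have h := T.comp_smul (0 : ℂ) a (0 : T.Hom τ σ)
  simpa using h

theorem zero_comp (T : RTCP) {σ ρ τ : ℕ} (a : T.Hom τ σ) :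
    T.comp (0 : T.Hom σ ρ) a = 0 := by
  have h := T.smul_comp (0 : ℂ) (0 : T.Hom σ ρ) a
  simpa using h

theorem tensor_zero (T : RTCP) {n m : ℕ} :
    T.tensor (0 : T.Hom n m) = 0 := by
  have h := T.tensor_smul (0 : ℂ) (0 : T.Hom n m)
  simpa using h

theorem comp_sub (T : RTCP) {σ ρ τ : ℕ} (a : T.Hom σ ρ) (b c : T.Hom τ σ) :
    T.comp a (b - c) = T.comp a b - T.comp a c := by
  rw [sub_eq_add_neg, ← neg_one_smul ℂ c, T.comp_add, T.comp_smul, neg_one_smul,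
    ← sub_eq_add_neg]

theorem sub_comp (T : RTCP) {σ ρ τ : ℕ} (a b : T.Hom σ ρ) (c : T.Hom τ σ) :
    T.comp (a - b) c = T.comp a c - T.comp b c := by
  rw [sub_eq_add_neg, ← neg_one_smul ℂ b, T.add_comp, T.smul_comp, neg_one_smul,
    ← sub_eq_add_neg]

theorem star'_sub (T : RTCP) {σ ρ : ℕ} (a b : T.Hom σ ρ) :
    T.star' (a - b) = T.star' a - T.star' b := by
  rw [sub_eq_add_neg, ← neg_one_smul ℂ b, T.star_add', T.star_smul']
  simp [sub_eq_add_neg]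

theorem tensor_sub (T : RTCP) {n m : ℕ} (a b : T.Hom n m) :
    T.tensor (a - b) = T.tensor a - T.tensor b := by
  rw [sub_eq_add_neg, ← neg_one_smul ℂ b, T.tensor_add, T.tensor_smul, neg_one_smul,
    ← sub_eq_add_neg]

theorem norm_star'_le (T : RTCP) {σ ρ : ℕ} (a : T.Hom σ ρ) : ‖a‖ ≤ ‖T.star' a‖ := by
  have h1 := T.norm_star_comp_self a
  have h2 := T.norm_comp_le (T.star' a) a
  rcases eq_or_lt_of_le (norm_nonneg a) with h | h
  · rw [← h]; exact norm_nonneg _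
  · have h3 : ‖a‖ * ‖a‖ ≤ ‖T.star' a‖ * ‖a‖ := by nlinarith
    exact le_of_mul_le_mul_right h3 h

theorem norm_star' (T : RTCP) {σ ρ : ℕ} (a : T.Hom σ ρ) : ‖T.star' a‖ = ‖a‖ := by
  refine le_antisymm ?_ (norm_star'_le T a)
  have h := norm_star'_le T (T.star' a)
  rwa [T.star_star'] at h

theorem tensorPow_one (T : RTCP) {n m : ℕ} (a : T.Hom n m) :
    T.tensorPow 1 a = T.tensor a := rfl

/-! #### C*-algebra structure on the diagonal morphism spaces -/

noncomputable instance instHomRing (T : RTCP) (n : ℕ) :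
    NonUnitalNormedRing (T.Hom n n) where
  __ := (inferInstance : NormedAddCommGroup (T.Hom n n))
  mul := T.comp
  left_distrib := T.comp_add
  right_distrib := T.add_comp
  zero_mul a := by
    show T.comp 0 a = 0
    exact zero_comp T a
  mul_zero a := by
    show T.comp a 0 = 0
    exact comp_zero T a
  mul_assoc := T.comp_assoc
  norm_mul_le := T.norm_comp_le

theorem mul_def (T : RTCP) {n : ℕ} (a b : T.Hom n n) : a * b = T.comp a b := rfl

noncomputable instance instHomStarRing (T : RTCP) (n : ℕ) :
    StarRing (T.Hom n n) where
  star := T.star'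
  star_involutive := T.star_star'
  star_mul := T.star_comp'
  star_add := T.star_add'

theorem star_def (T : RTCP) {n : ℕ} (a : T.Hom n n) : star a = T.star' a := rfl

instance instHomCStarRing (T : RTCP) (n : ℕ) : CStarRing (T.Hom n n) where
  norm_mul_self_le x :=
    le_of_eq ((sq ‖x‖).symm.trans (T.norm_star_comp_self x).symm)

instance instHomTower (T : RTCP) (n : ℕ) : IsScalarTower ℂ (T.Hom n n) (T.Hom n n) :=
  ⟨fun z a b => T.smul_comp z a b⟩

instance instHomSMulComm (T : RTCP) (n : ℕ) : SMulCommClass ℂ (T.Hom n n) (T.Hom n n) :=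
  ⟨fun z a b => (T.comp_smul z a b).symm⟩

instance instHomStarModule (T : RTCP) (n : ℕ) : StarModule ℂ (T.Hom n n) :=
  ⟨fun z a => by have h := T.star_smul' z a; rw [starRingEnd_apply] at h; exact h⟩

noncomputable instance instHomCStarAlgebra (T : RTCP) (n : ℕ) :
    NonUnitalCStarAlgebra (T.Hom n n) where

/-! #### Star-closedness of ideals -/

theorem approx_star (T : RTCP) (K : T.Ideal) {σ ρ : ℕ} {a : T.Hom σ ρ}
    (ha : a ∈ K.car σ ρ) (s : ℝ) (hs : 0 < s) :
    ∃ c ∈ K.car ρ σ, ‖T.star' a - c‖ ^ 2 ≤ 1 / (2 * Real.sqrt s) := by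
  set b : T.Hom σ σ := T.comp (T.star' a) a with hb_def
  have hbK : b ∈ K.car σ σ := K.comp_mem_left (T.star' a) ha
  have hsb : IsSelfAdjoint b := by
    show T.star' b = b
    rw [hb_def, T.star_comp', T.star_star']
  set f : ℝ → ℝ := fun t => s * t ^ 2 / (1 + s * t ^ 2) with hf_def
  set h : ℝ → ℝ := fun t => s * t / (1 + s * t ^ 2) with hh_def
  set g : ℝ → ℝ := fun t => t * (1 - f t) ^ 2 with hg_def
  have hdpos : ∀ t : ℝ, 0 < 1 + s * t ^ 2 := fun t => by positivity
  have hd : ∀ t : ℝ, 1 + s * t ^ 2 ≠ 0 := fun t => (hdpos t).ne'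
  have hfc : Continuous f := by
    apply Continuous.div (by fun_prop) (by fun_prop) hd
  have hhc : Continuous h := by
    apply Continuous.div (by fun_prop) (by fun_prop) hd
  have hf0 : f 0 = 0 := by simp [hf_def]
  have hh0 : h 0 = 0 := by simp [hh_def]
  set e : T.Hom σ σ := cfcₙ f b with he_def
  set w : T.Hom σ σ := cfcₙ h b with hw_def
  have he_sa : T.star' e = e := by
    have h1 := cfcₙ_star (f := f) (a := b)
    simp only [star_trivial] at h1
    exact h1.symm
  have heq_fh : f = fun t => t * h t := by
    funext t
    rw [hf_def, hh_def]
    field_simp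
  have he_mul : e = b * w := by
    have h1 : cfcₙ (fun t : ℝ => t * h t) b = cfcₙ (fun t : ℝ => t) b * cfcₙ h b :=
      cfcₙ_mul (fun t : ℝ => t) h b (continuous_id.continuousOn) rfl
        hhc.continuousOn hh0
    have h2 : cfcₙ (fun t : ℝ => t) b = b := cfcₙ_id' ℝ b
    rw [he_def, heq_fh, h1, h2, hw_def]
  have he_mem : e ∈ K.car σ σ := by
    rw [he_mul]
    exact K.comp_mem_right w hbK
  set x : T.Hom σ ρ := a - T.comp a e with hx_def
  have hsx : T.star' x = T.star' a - T.comp e (T.star' a) := by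
    rw [hx_def, star'_sub, T.star_comp', he_sa]
  have hy : T.comp (T.star' x) x
      = b - T.comp b e - (T.comp e b - T.comp e (T.comp b e)) := by
    have t1 : T.comp (T.star' a) (T.comp a e) = T.comp b e :=
      (T.comp_assoc (T.star' a) a e).symm
    have t2 : T.comp (T.comp e (T.star' a)) a = T.comp e b :=
      T.comp_assoc e (T.star' a) a
    have t3 : T.comp (T.comp e (T.star' a)) (T.comp a e) = T.comp e (T.comp b e) := by
      rw [T.comp_assoc e (T.star' a) (T.comp a e), t1]
    rw [hsx, hx_def, sub_comp, comp_sub, comp_sub, t1, t2, t3]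
  have hy_cfc : T.comp (T.star' x) x = cfcₙ g b := by
    have hth : Continuous (fun t : ℝ => t * f t) := continuous_id.mul hfc
    have c1 : cfcₙ (fun t : ℝ => t * f t) b = b * e := by
      rw [cfcₙ_mul (fun t : ℝ => t) f b (continuous_id.continuousOn) rfl
        hfc.continuousOn hf0, cfcₙ_id' ℝ b]
    have c2 : cfcₙ (fun t : ℝ => f t * t) b = e * b := by
      rw [cfcₙ_mul f (fun t : ℝ => t) b hfc.continuousOn hf0
        (continuous_id.continuousOn) rfl, cfcₙ_id' ℝ b]
    have c3 : cfcₙ (fun t : ℝ => f t * (t * f t)) b = e * (b * e) := by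
      rw [cfcₙ_mul f (fun t : ℝ => t * f t) b hfc.continuousOn hf0
        hth.continuousOn (by simp [hf0]), c1]
    have c4 : cfcₙ (fun t : ℝ => t - t * f t) b = b - b * e := by
      rw [cfcₙ_sub (fun t : ℝ => t) (fun t : ℝ => t * f t) b
        (continuous_id.continuousOn) rfl hth.continuousOn (by simp [hf0]),
        cfcₙ_id' ℝ b, c1]
    have c5 : cfcₙ (fun t : ℝ => f t * t - f t * (t * f t)) b
        = e * b - e * (b * e) := by
      rw [cfcₙ_sub (fun t : ℝ => f t * t) (fun t : ℝ => f t * (t * f t)) b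
        (hfc.mul continuous_id).continuousOn (by simp [hf0])
        (hfc.mul hth).continuousOn (by simp [hf0]), c2, c3]
    have c6 : cfcₙ (fun t : ℝ => (t - t * f t) - (f t * t - f t * (t * f t))) b
        = (b - b * e) - (e * b - e * (b * e)) := by
      rw [cfcₙ_sub (fun t : ℝ => t - t * f t)
        (fun t : ℝ => f t * t - f t * (t * f t)) b
        (continuous_id.sub hth).continuousOn (by simp [hf0])
        ((hfc.mul continuous_id).sub (hfc.mul hth)).continuousOn (by simp [hf0]),
        c4, c5]
    have hgeq : g = fun t : ℝ => (t - t * f t) - (f t * t - f t * (t * f t)) := by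
      funext t
      rw [hg_def]
      ring
    rw [hy]
    show b - b * e - (e * b - e * (b * e)) = cfcₙ g b
    rw [hgeq, c6]
  have hgb : ∀ t ∈ quasispectrum ℝ b, ‖g t‖ ≤ 1 / (2 * Real.sqrt s) := by
    intro t _
    have hd0 : (0:ℝ) < 1 + s * t ^ 2 := hdpos t
    have hg_eq : g t = t / (1 + s * t ^ 2) ^ 2 := by
      rw [hg_def, hf_def]
      field_simp
      ring
    have hsqs : 0 < Real.sqrt s := Real.sqrt_pos.mpr hs
    rw [hg_eq, Real.norm_eq_abs, abs_div,
      abs_of_pos (by positivity : (0:ℝ) < (1 + s * t ^ 2) ^ 2),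
      div_le_div_iff₀ (by positivity) (by positivity)]
    have hAM : 2 * Real.sqrt s * |t| ≤ 1 + s * t ^ 2 := by
      nlinarith [sq_nonneg (Real.sqrt s * |t| - 1), Real.sq_sqrt hs.le, sq_abs t,
        Real.sqrt_nonneg s]
    nlinarith [abs_nonneg t, Real.sqrt_nonneg s, hd0,
      mul_nonneg hd0.le (mul_nonneg hs.le (sq_nonneg t))]
  have hnorm_y : ‖cfcₙ g b‖ ≤ 1 / (2 * Real.sqrt s) := norm_cfcₙ_le hgb
  have hx2 : ‖x‖ ^ 2 ≤ 1 / (2 * Real.sqrt s) := by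
    have h1 := T.norm_star_comp_self x
    rw [hy_cfc] at h1
    exact h1.symm.trans_le hnorm_y
  refine ⟨T.comp e (T.star' a), K.comp_mem_right (T.star' a) he_mem, ?_⟩
  have h2 : T.star' a - T.comp e (T.star' a) = T.star' x := hsx.symm
  rw [h2, norm_star']
  exact hx2

theorem star_mem (T : RTCP) (K : T.Ideal) {σ ρ : ℕ} {a : T.Hom σ ρ}
    (ha : a ∈ K.car σ ρ) : T.star' a ∈ K.car ρ σ := by
  have hclosed := K.isClosed' ρ σ
  suffices hcl : T.star' a ∈ closure (K.car ρ σ : Set (T.Hom ρ σ)) by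
    rwa [hclosed.closure_eq] at hcl
  rw [Metric.mem_closure_iff]
  intro ε hε
  set s : ℝ := (2 / ε ^ 2 + 1) ^ 2 with hs_def
  have hs1 : (0:ℝ) < 2 / ε ^ 2 + 1 := by positivity
  have hs : 0 < s := by rw [hs_def]; positivity
  have hsqrt : Real.sqrt s = 2 / ε ^ 2 + 1 := by
    rw [hs_def]; exact Real.sqrt_sq hs1.le
  obtain ⟨c, hc, hcb⟩ := approx_star T K ha s hs
  refine ⟨c, hc, ?_⟩
  rw [dist_eq_norm]
  have hbound : 1 / (2 * Real.sqrt s) < (ε / 2) ^ 2 := by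
    rw [hsqrt, div_lt_iff₀ (by positivity)]
    have hkey : (ε / 2) ^ 2 * (2 * (2 / ε ^ 2 + 1)) = 1 + ε ^ 2 / 2 := by
      field_simp
    rw [hkey]
    nlinarith [sq_nonneg ε, hε]
  have hlt : ‖T.star' a - c‖ ^ 2 < (ε / 2) ^ 2 := lt_of_le_of_lt hcb hbound
  have h3 : ‖T.star' a - c‖ < ε / 2 := by
    nlinarith [norm_nonneg (T.star' a - c), hε]
  linarith

/-! #### Contractivity of the right tensoring -/

noncomputable def tensorDiagHom (T : RTCP) (m : ℕ) :
    T.Hom m m →⋆ₙₐ[ℂ] T.Hom (m + 1) (m + 1) where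
  toFun := T.tensor
  map_add' := T.tensor_add
  map_zero' := tensor_zero T
  map_smul' := fun z a => by simpa using T.tensor_smul z a
  map_mul' := T.tensor_comp
  map_star' := T.tensor_star

theorem norm_tensor_le (T : RTCP) {n m : ℕ} (a : T.Hom n m) :
    ‖T.tensor a‖ ≤ ‖a‖ := by
  have h1 := T.norm_star_comp_self (T.tensor a)
  have h2 : T.comp (T.star' (T.tensor a)) (T.tensor a)
      = T.tensor (T.comp (T.star' a) a) := by
    rw [← T.tensor_star, ← T.tensor_comp]
  rw [h2] at h1
  have h3 : ‖T.tensor (T.comp (T.star' a) a)‖ ≤ ‖T.comp (T.star' a) a‖ :=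
    NonUnitalStarAlgHom.norm_apply_le (tensorDiagHom T n) (T.comp (T.star' a) a)
  have h4 := T.norm_comp_le (T.star' a) a
  have h5 := norm_star' T a
  nlinarith [norm_nonneg (T.tensor a), norm_nonneg a]

/-! #### Contractivity of right tensor representations -/

section Rep

variable {T : RTCP} {K : T.Ideal} {B : Type} [NonUnitalCStarAlgebra B]

theorem map_zero_aux (π : RTRep T K B) (n m : ℕ) : π.map n m 0 = 0 := by
  have h := π.map_smul (n := n) (m := m) (0 : ℂ) (Submodule.zero_mem (K.car m n))
  simpa using h

theorem map_sub_aux (π : RTRep T K B) {n m : ℕ} {a b : T.Hom m n}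
    (ha : a ∈ K.car m n) (hb : b ∈ K.car m n) :
    π.map n m (a - b) = π.map n m a - π.map n m b := by
  have h1 : a - b = a + (-1 : ℂ) • b := by
    rw [neg_one_smul, ← sub_eq_add_neg]
  rw [h1, π.map_add ha ((K.car m n).smul_mem _ hb), π.map_smul _ hb, neg_one_smul,
    ← sub_eq_add_neg]

noncomputable def diagStarSubalg (T : RTCP) (K : T.Ideal) (m : ℕ) :
    NonUnitalStarSubalgebra ℂ (T.Hom m m) where
  carrier := K.car m m
  add_mem' := fun ha hb => (K.car m m).add_mem ha hb
  zero_mem' := (K.car m m).zero_mem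
  smul_mem' := fun c {x} hx => (K.car m m).smul_mem c hx
  mul_mem' := fun {a b} _ hb => K.comp_mem_left a hb
  star_mem' := fun {a} ha => star_mem T K ha

theorem norm_pi_diag_le (π : RTRep T K B) {m : ℕ} {y : T.Hom m m}
    (hy : y ∈ K.car m m) : ‖π.map m m y‖ ≤ ‖y‖ := by
  haveI hcl : IsClosed ((diagStarSubalg T K m : Set (T.Hom m m))) := K.isClosed' m m
  let φ : diagStarSubalg T K m →⋆ₙₐ[ℂ] B :=
  { toFun := fun x => π.map m m x.1
    map_add' := fun x y => π.map_add x.2 y.2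
    map_zero' := map_zero_aux π m m
    map_smul' := fun z x => by simpa using π.map_smul z x.2
    map_mul' := fun x y => (π.map_mul x.2 y.2).symm
    map_star' := fun x => (π.map_star x.2).symm }
  exact NonUnitalStarAlgHom.norm_apply_le φ (⟨y, hy⟩ : diagStarSubalg T K m)

theorem norm_map_le (π : RTRep T K B) {n m : ℕ} {a : T.Hom m n}
    (ha : a ∈ K.car m n) : ‖π.map n m a‖ ≤ ‖a‖ := by
  have hsa : T.star' a ∈ K.car n m := star_mem T K ha
  have hyK : T.comp (T.star' a) a ∈ K.car m m := K.comp_mem_left (T.star' a) ha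
  have h1 : star (π.map n m a) * π.map n m a = π.map m m (T.comp (T.star' a) a) := by
    rw [π.map_star ha, π.map_mul hsa ha]
  have h2 := CStarRing.norm_star_mul_self (x := π.map n m a)
  rw [h1] at h2
  have h3 : ‖π.map m m (T.comp (T.star' a) a)‖ ≤ ‖T.comp (T.star' a) a‖ :=
    norm_pi_diag_le π hyK
  have h4 := T.norm_comp_le (T.star' a) a
  have h5 := norm_star' T a
  nlinarith [norm_nonneg (π.map n m a), norm_nonneg a]

theorem eq_of_star_sub_mul {u v : B} (h : star (u - v) * (u - v) = 0) : u = v := by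
  have h2 := CStarRing.norm_star_mul_self (x := u - v)
  rw [h, norm_zero] at h2
  have h3 : ‖u - v‖ = 0 := mul_self_eq_zero.mp h2.symm
  rw [norm_eq_zero, sub_eq_zero] at h3
  exact h3

/-! #### The coisometricity ideal -/

theorem coiso_comp_left (π : RTRep T K B) {σ ρ τ : ℕ} (a : T.Hom σ ρ)
    {b : T.Hom τ σ} (hb : b ∈ π.coisoSet σ τ) :
    T.comp a b ∈ π.coisoSet ρ τ := by
  obtain ⟨hbK, hbtK, hbeq⟩ := hb
  have hx : T.comp a b ∈ K.car τ ρ := K.comp_mem_left a hbK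
  have htx : T.tensor (T.comp a b) ∈ K.car (τ + 1) (ρ + 1) := by
    rw [T.tensor_comp]
    exact K.comp_mem_left _ hbtK
  refine ⟨hx, htx, ?_⟩
  have hsx : T.star' (T.comp a b) ∈ K.car ρ τ := star_mem T K hx
  have hyK : T.comp (T.star' (T.comp a b)) (T.comp a b) ∈ K.car τ τ :=
    K.comp_mem_left _ hx
  have hy_sa : T.star' (T.comp (T.star' (T.comp a b)) (T.comp a b))
      = T.comp (T.star' (T.comp a b)) (T.comp a b) := by
    rw [T.star_comp', T.star_star']
  have htyK : T.tensor (T.comp (T.star' (T.comp a b)) (T.comp a b))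
      ∈ K.car (τ + 1) (τ + 1) := by
    rw [T.tensor_comp]
    exact K.comp_mem_left _ htx
  set u := π.map ρ τ (T.comp a b) with hu
  set v := π.map (ρ + 1) (τ + 1) (T.tensor (T.comp a b)) with hv
  set y := T.comp (T.star' (T.comp a b)) (T.comp a b) with hy_def
  have e1 : star u * u = π.map τ τ y := by
    rw [hu, π.map_star hx, π.map_mul hsx hx]
  have e2 : star u * v = π.map (τ + 1) (τ + 1) (T.tensor y) := by
    rw [hu, hv, π.map_star hx, π.map_rt 1 hsx htx]
    congr 1
    rw [tensorPow_one, ← T.tensor_comp]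
  have e3 : star v * v = π.map (τ + 1) (τ + 1) (T.tensor y) := by
    rw [hv, π.map_star htx, π.map_mul (star_mem T K htx) htx]
    congr 1
    rw [← T.tensor_star, ← T.tensor_comp]
  have e4 : star v * u = π.map (τ + 1) (τ + 1) (T.tensor y) := by
    calc star v * u = star (star u * v) := by rw [star_mul, star_star]
    _ = star (π.map (τ + 1) (τ + 1) (T.tensor y)) := by rw [e2]
    _ = π.map (τ + 1) (τ + 1) (T.star' (T.tensor y)) := π.map_star htyK
    _ = π.map (τ + 1) (τ + 1) (T.tensor y) := by
        rw [← T.tensor_star, hy_def, hy_sa]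
  have e5 : π.map τ τ y = π.map (τ + 1) (τ + 1) (T.tensor y) := by
    have hc : T.comp (T.star' (T.comp a b)) a ∈ K.car σ τ :=
      K.comp_mem_right a hsx
    have hyc : y = T.comp (T.comp (T.star' (T.comp a b)) a) b := by
      rw [hy_def, T.comp_assoc]
    rw [hyc, ← π.map_mul hc hbK, hbeq, π.map_rt 1 hc hbtK]
    congr 1
    rw [tensorPow_one, ← T.tensor_comp]
  apply eq_of_star_sub_mul
  have expand : star (u - v) * (u - v)
      = (star u * u - star u * v) - (star v * u - star v * v) := by
    rw [star_sub, sub_mul, mul_sub, mul_sub]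
  rw [expand, e1, e2, e3, e4, e5]
  abel

theorem coiso_star (π : RTRep T K B) {n m : ℕ} {a : T.Hom m n}
    (ha : a ∈ π.coisoSet n m) : T.star' a ∈ π.coisoSet m n := by
  obtain ⟨h1, h2, h3⟩ := ha
  refine ⟨star_mem T K h1, ?_, ?_⟩
  · rw [T.tensor_star]
    exact star_mem T K h2
  · calc π.map m n (T.star' a) = star (π.map n m a) := (π.map_star h1).symm
    _ = star (π.map (n + 1) (m + 1) (T.tensor a)) := by rw [h3]
    _ = π.map (m + 1) (n + 1) (T.star' (T.tensor a)) := π.map_star h2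
    _ = π.map (m + 1) (n + 1) (T.tensor (T.star' a)) := by rw [T.tensor_star]

theorem coiso_comp_right (π : RTRep T K B) {σ ρ τ : ℕ} (a : T.Hom σ ρ)
    {k : T.Hom ρ τ} (hk : k ∈ π.coisoSet τ ρ) :
    T.comp k a ∈ π.coisoSet τ σ := by
  have h1 : T.star' k ∈ π.coisoSet ρ τ := coiso_star π hk
  have h2 : T.comp (T.star' a) (T.star' k) ∈ π.coisoSet σ τ :=
    coiso_comp_left π (T.star' a) h1
  have h3 := coiso_star π h2
  rwa [T.star_comp', T.star_star', T.star_star'] at h3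

theorem isClosed_coisoSet (π : RTRep T K B) (n m : ℕ) :
    IsClosed (π.coisoSet n m) := by
  apply IsSeqClosed.isClosed
  intro x a hx hxa
  have hdiff : Filter.Tendsto (fun k => ‖x k - a‖) Filter.atTop (nhds 0) :=
    tendsto_iff_norm_sub_tendsto_zero.mp hxa
  have h1 : a ∈ K.car m n :=
    (K.isClosed' m n).mem_of_tendsto hxa
      (Filter.Eventually.of_forall fun k => (hx k).1)
  have hsub : ∀ k, x k - a ∈ K.car m n := fun k => (K.car m n).sub_mem (hx k).1 h1
  have htt : Filter.Tendsto (fun k => T.tensor (x k)) Filter.atTop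
      (nhds (T.tensor a)) := by
    rw [tendsto_iff_norm_sub_tendsto_zero]
    refine squeeze_zero (fun k => norm_nonneg _) (fun k => ?_) hdiff
    rw [← tensor_sub]
    exact norm_tensor_le T _
  have h2 : T.tensor a ∈ K.car (m + 1) (n + 1) :=
    (K.isClosed' (m + 1) (n + 1)).mem_of_tendsto htt
      (Filter.Eventually.of_forall fun k => (hx k).2.1)
  have hπ1 : Filter.Tendsto (fun k => π.map n m (x k)) Filter.atTop
      (nhds (π.map n m a)) := by
    rw [tendsto_iff_norm_sub_tendsto_zero]
    refine squeeze_zero (fun k => norm_nonneg _) (fun k => ?_) hdiff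
    rw [← map_sub_aux π (hx k).1 h1]
    exact norm_map_le π (hsub k)
  have hπ2 : Filter.Tendsto (fun k => π.map (n + 1) (m + 1) (T.tensor (x k)))
      Filter.atTop (nhds (π.map (n + 1) (m + 1) (T.tensor a))) := by
    rw [tendsto_iff_norm_sub_tendsto_zero]
    refine squeeze_zero (fun k => norm_nonneg _) (fun k => ?_) hdiff
    have hsub2 : T.tensor (x k) - T.tensor a = T.tensor (x k - a) :=
      (tensor_sub T _ _).symm
    rw [← map_sub_aux π (hx k).2.1 h2, hsub2]
    calc ‖π.map (n + 1) (m + 1) (T.tensor (x k - a))‖ ≤ ‖T.tensor (x k - a)‖ := by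
          apply norm_map_le π
          rw [← hsub2]
          exact (K.car (m + 1) (n + 1)).sub_mem (hx k).2.1 h2
    _ ≤ ‖x k - a‖ := norm_tensor_le T _
  have heq : (fun k => π.map n m (x k))
      = fun k => π.map (n + 1) (m + 1) (T.tensor (x k)) :=
    funext fun k => (hx k).2.2
  refine ⟨h1, h2, ?_⟩
  apply tendsto_nhds_unique hπ1
  rw [heq]
  exact hπ2

noncomputable def coisoSubmodule (π : RTRep T K B) (σ ρ : ℕ) :
    Submodule ℂ (T.Hom σ ρ) where
  carrier := π.coisoSet ρ σ
  zero_mem' := by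
    refine ⟨(K.car σ ρ).zero_mem, ?_, ?_⟩
    · rw [tensor_zero]
      exact (K.car (σ + 1) (ρ + 1)).zero_mem
    · rw [tensor_zero, map_zero_aux, map_zero_aux]
  add_mem' := by
    intro a b ha hb
    refine ⟨(K.car σ ρ).add_mem ha.1 hb.1, ?_, ?_⟩
    · rw [T.tensor_add]
      exact (K.car (σ + 1) (ρ + 1)).add_mem ha.2.1 hb.2.1
    · rw [π.map_add ha.1 hb.1, T.tensor_add, π.map_add ha.2.1 hb.2.1,
        ha.2.2, hb.2.2]
  smul_mem' := by
    intro z a ha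
    refine ⟨(K.car σ ρ).smul_mem z ha.1, ?_, ?_⟩
    · rw [T.tensor_smul]
      exact (K.car (σ + 1) (ρ + 1)).smul_mem z ha.2.1
    · rw [π.map_smul z ha.1, T.tensor_smul, π.map_smul z ha.2.1, ha.2.2]

end Rep

end RTCPAux

/-- For a right tensor representation `π` of an ideal `K` in a right
tensor C*-precategory `T`, the sets `J(n,m) = {a ∈ J(K)(n,m) : π_nm(a) = π_{n+1,m+1}(a⊗1)}`
form an ideal in `J(K)`; moreover `J ∩ ker(⊗1) ⊆ ker π`, `ker π ∩ J(K) ⊆ J`, and if `π` is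
faithful then `J ∩ ker(⊗1) = {0}` (i.e. `J ⊆ (ker ⊗1)^⊥`). -/
theorem coisometricity_ideal_of_representation (T : RTCP) (K : T.Ideal)
    (B : CStarAlg) (π : RTRep T K B.carrier) :
    (∃ Jc : T.Ideal, ∀ n m : ℕ, (Jc.car m n : Set (T.Hom m n)) = π.coisoSet n m) ∧
    (∀ (n m : ℕ) (a : T.Hom m n), a ∈ π.coisoSet n m → T.tensor a = 0 →
      π.map n m a = 0) ∧
    (∀ (n m : ℕ) (a : T.Hom m n), a ∈ K.car m n →
      T.tensor a ∈ K.car (m + 1) (n + 1) → π.map n m a = 0 → a ∈ π.coisoSet n m) ∧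
    (π.Faithful →
      ∀ (n m : ℕ) (a : T.Hom m n), a ∈ π.coisoSet n m → T.tensor a = 0 → a = 0) := by
  classical
  open RTCPAux in
  refine ⟨⟨⟨fun σ ρ => coisoSubmodule π σ ρ, fun σ ρ => isClosed_coisoSet π ρ σ,
      fun {σ ρ τ} a {b} hb => coiso_comp_left π a hb,
      fun {σ ρ τ} a {k} hk => coiso_comp_right π a hk⟩,
      fun n m => rfl⟩, ?_, ?_, ?_⟩
  · intro n m a ha h0
    rw [ha.2.2, h0, map_zero_aux]
  · intro n m a ha hta h0
    refine ⟨ha, hta, ?_⟩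
    have hst : π.map m n (T.star' a) = 0 := by
      have h := π.map_star ha
      rw [h0, star_zero] at h
      exact h.symm
    have hrt := π.map_rt 1 (star_mem T K ha) hta
    rw [hst, zero_mul] at hrt
    have hsv : star (π.map (n + 1) (m + 1) (T.tensor a))
        * π.map (n + 1) (m + 1) (T.tensor a) = 0 := by
      rw [π.map_star hta, π.map_mul (star_mem T K hta) hta]
      have heq : T.star' (T.tensor a) = T.tensorPow 1 (T.star' a) := by
        rw [tensorPow_one, T.tensor_star]
      rw [heq]
      exact hrt.symm
    have hv0 : π.map (n + 1) (m + 1) (T.tensor a) = 0 := by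
      have h2 := CStarRing.norm_star_mul_self
        (x := π.map (n + 1) (m + 1) (T.tensor a))
      rw [hsv, norm_zero] at h2
      have h3 := mul_self_eq_zero.mp h2.symm
      rwa [norm_eq_zero] at h3
    rw [h0, hv0]
  · intro hF n m a ha h0
    have h1 : π.map n m a = 0 := by
      rw [ha.2.2, h0, map_zero_aux]
    exact hF n m ha.1 ((K.car m n).zero_mem)
      (by rw [h1, map_zero_aux])


end
end

section
/- Let K be an ideal in a right tensor C*-precategory T and let π = {π_nm} be a right tensor representation of K in a C*-algebra B. Then the formula Ψ_π((a_nm)_{n,m∈ℕ}) = Σ_{n,m} π_nm(a_nm) (a finite sum) defines a *-representation of the *-algebra M_T(K) in B; that is, Ψ_π is linear, Ψ_π(a⋆b) = Ψ_π(a)Ψ_π(b), and Ψ_π(a*) = Ψ_π(a)*. -/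
noncomputable section

open Filter Topology Metric

namespace RTCP

variable (T : RTCP)

/-- Matrices `(a_nm)_{n,m ∈ ℕ}` with `a_nm ∈ T(m,n)`. -/
abbrev MatSpace := ∀ n m : ℕ, T.Hom m n

/-- Membership in `M_T(K)`: all entries lie in the ideal `K` and only finitely many
entries are nonzero. -/
def IsMat (K : T.Ideal) (a : T.MatSpace) : Prop :=
  (∀ n m : ℕ, a n m ∈ K.car m n) ∧ Set.Finite {p : ℕ × ℕ | a p.1 p.2 ≠ 0}

/-- The involution of matrices: `(a*)_nm = (a_mn)*`. -/
def mstar (a : T.MatSpace) : T.MatSpace := fun n m => T.star' (a m n)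

/-- The shift `Λ`: `Λ(a)_{n+1,m+1} = a_nm ⊗ 1`, and `Λ(a)` vanishes on the
zeroth row and column. -/
def lam (a : T.MatSpace) : T.MatSpace := fun n m =>
  match n, m with
  | n' + 1, m' + 1 => T.tensor (a n' m')
  | _, _ => 0

/-- Iterates of the shift `Λ`. -/
def lamPow : ℕ → T.MatSpace → T.MatSpace
  | 0, a => a
  | k + 1, a => T.lam (lamPow k a)

/-- The ordinary matrix product (composition of entries in `T`). -/
def matMul (a b : T.MatSpace) : T.MatSpace := fun n m => ∑ᶠ j : ℕ, T.comp (a n j) (b j m)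

/-- The convolution multiplication
`a ⋆ b = a · (Σ_{k≥0} Λ^k(b)) + (Σ_{k≥1} Λ^k(a)) · b` on `M_T(K)`. -/
def conv (a b : T.MatSpace) : T.MatSpace :=
  T.matMul a (fun n m => ∑ᶠ k : ℕ, T.lamPow k b n m) +
    T.matMul (fun n m => ∑ᶠ k : ℕ, T.lamPow (k + 1) a n m) b

/-- The canonical embedding `i^M_(n,m) : T(m,n) → M_T(K)`, placing `x` at the
entry `(n,m)` and `0` elsewhere. -/
def single (n m : ℕ) (x : T.Hom m n) : T.MatSpace := fun p q =>
  if h : p = n ∧ q = m then cast (by rw [h.1, h.2]) x else 0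

end RTCP

/-- The integrated form `Ψ_π(a) = Σ_{n,m} π_nm(a_nm)` of a right tensor representation,
on matrices. -/
def RTRep.Psi {T : RTCP} {K : T.Ideal} {B : Type} [NonUnitalCStarAlgebra B]
    (π : RTRep T K B) (a : T.MatSpace) : B :=
  ∑ᶠ (n : ℕ) (m : ℕ), π.map n m (a n m)
namespace CstarPrecat

variable {Obj : Type} (T : CstarPrecat Obj)

section basic

variable {σ ρ τ : Obj}

lemma zero_comp (b : T.Hom τ σ) : T.comp (0 : T.Hom σ ρ) b = 0 := by
  have h := T.smul_comp 0 (0 : T.Hom σ ρ) b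
  simpa using h

lemma comp_zero (a : T.Hom σ ρ) : T.comp a (0 : T.Hom τ σ) = 0 := by
  have h := T.comp_smul 0 a (0 : T.Hom τ σ)
  simpa using h

lemma star'_zero : T.star' (0 : T.Hom σ ρ) = 0 := by
  have h := T.star_smul' 0 (0 : T.Hom σ ρ)
  simpa using h

lemma comp_neg (a : T.Hom σ ρ) (b : T.Hom τ σ) : T.comp a (-b) = -(T.comp a b) := by
  rw [← neg_one_smul ℂ b, T.comp_smul, neg_one_smul]

lemma neg_comp (a : T.Hom σ ρ) (b : T.Hom τ σ) : T.comp (-a) b = -(T.comp a b) := by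
  rw [← neg_one_smul ℂ a, T.smul_comp, neg_one_smul]

lemma comp_sub (a : T.Hom σ ρ) (b c : T.Hom τ σ) :
    T.comp a (b - c) = T.comp a b - T.comp a c := by
  rw [sub_eq_add_neg, T.comp_add, T.comp_neg, sub_eq_add_neg]

lemma sub_comp (a b : T.Hom σ ρ) (c : T.Hom τ σ) :
    T.comp (a - b) c = T.comp a c - T.comp b c := by
  rw [sub_eq_add_neg, T.add_comp, T.neg_comp, sub_eq_add_neg]

lemma star'_sub (a b : T.Hom σ ρ) : T.star' (a - b) = T.star' a - T.star' b := by
  rw [sub_eq_add_neg, T.star_add', ← neg_one_smul ℂ b, T.star_smul']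
  simp [sub_eq_add_neg]

lemma norm_star'_le (a : T.Hom σ ρ) : ‖a‖ ≤ ‖T.star' a‖ := by
  rcases eq_or_lt_of_le (norm_nonneg a) with h | h
  · rw [← h]; exact norm_nonneg _
  · have h1 : ‖a‖ ^ 2 ≤ ‖T.star' a‖ * ‖a‖ := by
      rw [← T.norm_star_comp_self a]; exact T.norm_comp_le _ _
    rw [pow_two] at h1
    exact le_of_mul_le_mul_right h1 h

lemma norm_star' (a : T.Hom σ ρ) : ‖T.star' a‖ = ‖a‖ := by
  refine le_antisymm ?_ (T.norm_star'_le a)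
  have := T.norm_star'_le (T.star' a)
  rwa [T.star_star'] at this

end basic

section diag

variable (σ : Obj)

noncomputable instance instNonUnitalRing : NonUnitalRing (T.Hom σ σ) :=
  { (inferInstance : AddCommGroup (T.Hom σ σ)) with
    mul := T.comp
    left_distrib := T.comp_add
    right_distrib := fun a b c => T.add_comp a b c
    zero_mul := fun a => T.zero_comp a
    mul_zero := fun a => T.comp_zero a
    mul_assoc := T.comp_assoc }

lemma mul_def (a b : T.Hom σ σ) : a * b = T.comp a b := rfl

noncomputable instance instStarRing : StarRing (T.Hom σ σ) where
  star := T.star'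
  star_involutive := T.star_star'
  star_mul := T.star_comp'
  star_add := T.star_add'

lemma star_def (a : T.Hom σ σ) : star a = T.star' a := rfl

noncomputable instance instNonUnitalNormedRing : NonUnitalNormedRing (T.Hom σ σ) :=
  { (inferInstance : NormedAddCommGroup (T.Hom σ σ)),
    (inferInstance : NonUnitalRing (T.Hom σ σ)) with
    norm_mul_le := T.norm_comp_le }

instance instCStarRing : CStarRing (T.Hom σ σ) where
  norm_mul_self_le x := by
    rw [← sq]
    rw [show star x * x = T.comp (T.star' x) x from rfl, T.norm_star_comp_self]

instance instIsScalarTower : IsScalarTower ℂ (T.Hom σ σ) (T.Hom σ σ) :=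
  ⟨fun z a b => T.smul_comp z a b⟩

instance instSMulCommClass : SMulCommClass ℂ (T.Hom σ σ) (T.Hom σ σ) :=
  ⟨fun z a b => (T.comp_smul z a b).symm⟩

instance instStarModule : StarModule ℂ (T.Hom σ σ) :=
  ⟨fun z a => T.star_smul' z a⟩

noncomputable instance instNonUnitalCStarAlgebra : NonUnitalCStarAlgebra (T.Hom σ σ) :=
  { instNonUnitalNormedRing T σ, instStarRing T σ, instCStarRing T σ,
    (inferInstance : CompleteSpace (T.Hom σ σ)),
    (inferInstance : NormedSpace ℂ (T.Hom σ σ)),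
    instIsScalarTower T σ, instSMulCommClass T σ, instStarModule T σ with }

end diag

end CstarPrecat
namespace CstarPrecat

variable {Obj : Type} {T : CstarPrecat Obj}

/-- Closed two-sided ideals in a C*-precategory are star-closed. -/
theorem Ideal.star_mem (K : T.Ideal) {σ ρ : Obj} {a : T.Hom σ ρ}
    (ha : a ∈ K.car σ ρ) : T.star' a ∈ K.car ρ σ := by
  classical
  set A := T.Hom σ σ with hA
  set h : A := T.comp (T.star' a) a with hh
  have hK : h ∈ K.car σ σ := K.comp_mem_left _ ha
  have hsa : IsSelfAdjoint h := by
    show T.star' h = h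
    rw [hh, T.star_comp', T.star_star']
  -- every element of the functional calculus of `h` lies in the ideal
  have hcfc : ∀ g : ContinuousMapZero (quasispectrum ℝ h) ℝ,
      cfcₙHom (R := ℝ) hsa g ∈ K.car σ σ := by
    intro g
    have h0 : ((0 : quasispectrum ℝ h) : ℝ) = 0 := rfl
    induction g using ContinuousMapZero.induction_on_of_compact with
    | zero => simpa using (K.car σ σ).zero_mem
    | id =>
        have hid : cfcₙHom (R := ℝ) hsa (ContinuousMapZero.id (quasispectrum ℝ h)) = h := cfcₙHom_id hsa
        rw [hid]; exact hK
    | star_id =>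
        have hid : cfcₙHom (R := ℝ) hsa (ContinuousMapZero.id (quasispectrum ℝ h)) = h := cfcₙHom_id hsa
        rw [map_star, hid]
        show T.star' h ∈ K.car σ σ
        rw [hh, T.star_comp', T.star_star']
        exact hK
    | add f g hf hg => rw [map_add]; exact (K.car σ σ).add_mem hf hg
    | mul f g hf hg =>
        rw [map_mul]
        exact K.comp_mem_left _ hg
    | smul r f hf =>
        rw [map_smul]
        show (r : ℂ) • cfcₙHom (R := ℝ) hsa f ∈ K.car σ σ
        exact (K.car σ σ).smul_mem _ hf
    | frequently f hf =>
        have hcont : Continuous (cfcₙHom (R := ℝ) hsa) := cfcₙHom_continuous hsa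
        have := (hcont.tendsto f).frequently hf
        have hclosed := K.isClosed' σ σ
        have hmem : (cfcₙHom (R := ℝ) hsa) f ∈ closure (K.car σ σ : Set (T.Hom σ σ)) :=
          mem_closure_iff_frequently.mpr this
        rwa [hclosed.closure_eq] at hmem
  -- the approximate unit functions
  set c : ℕ → ℝ := fun n => (n : ℝ) + 1 with hc
  have hcpos : ∀ n, 0 < c n := fun n => by positivity
  set fn : ℕ → ℝ → ℝ := fun n t => c n * t ^ 2 / (1 + c n * t ^ 2) with hfn
  have hden : ∀ n t, 0 < 1 + c n * t ^ 2 := fun n t => by positivity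
  have hfn_cont : ∀ n, Continuous (fn n) := by
    intro n
    exact (continuous_const.mul (continuous_pow 2)).div
      (continuous_const.add (continuous_const.mul (continuous_pow 2)))
      (fun t => (hden n t).ne')
  have hfn0 : ∀ n, fn n 0 = 0 := fun n => by simp [hfn]
  set u : ℕ → A := fun n => cfcₙ (fn n) h with hu
  have hu_mem : ∀ n, u n ∈ K.car σ σ := by
    intro n
    rw [hu]
    simp only
    rw [cfcₙ_apply (fn n) h ((hfn_cont n).continuousOn) (hfn0 n)]
    exact hcfc _
  have hu_sa : ∀ n, IsSelfAdjoint (u n) := fun n => cfcₙ_predicate (fn n) h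
  -- the error estimate
  set gn : ℕ → ℝ → ℝ := fun n t => t * (1 - fn n t) ^ 2 with hgn
  have hgn_cont : ∀ n, Continuous (gn n) := fun n =>
    continuous_id.mul ((continuous_const.sub (hfn_cont n)).pow 2)
  have hgn0 : ∀ n, gn n 0 = 0 := fun n => by simp [hgn, hfn]
  have hgn_bound : ∀ n t, |gn n t| ≤ 1 / (2 * Real.sqrt (c n)) := by
    intro n t
    have hs : Real.sqrt (c n) ^ 2 = c n := Real.sq_sqrt (hcpos n).le
    have hspos : 0 < Real.sqrt (c n) := Real.sqrt_pos.mpr (hcpos n)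
    have h1 : 1 - fn n t = 1 / (1 + c n * t ^ 2) := by
      simp only [hfn]
      rw [eq_div_iff (hden n t).ne', sub_mul, div_mul_cancel₀ _ (hden n t).ne']; ring
    rw [hgn]
    simp only
    rw [h1, abs_mul, abs_pow, abs_of_pos (by positivity : (0:ℝ) < 1 / (1 + c n * t ^ 2))]
    have key : |t| * (1 / (1 + c n * t ^ 2)) ^ 2 ≤ 1 / (2 * Real.sqrt (c n)) := by
      rw [div_pow, one_pow, mul_one_div, div_le_div_iff₀ (by positivity) (by positivity)]
      have hAM : 2 * Real.sqrt (c n) * |t| ≤ 1 + c n * t ^ 2 := by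
        nlinarith [sq_nonneg (Real.sqrt (c n) * |t| - 1), sq_abs t]
      have hx : 0 ≤ c n * t ^ 2 := by positivity
      have ht2 : 1 + c n * t ^ 2 ≤ (1 + c n * t ^ 2) ^ 2 := by nlinarith [hx]
      calc |t| * (2 * Real.sqrt (c n)) = 2 * Real.sqrt (c n) * |t| := by ring
        _ ≤ 1 + c n * t ^ 2 := hAM
        _ ≤ (1 + c n * t ^ 2) ^ 2 := ht2
        _ = 1 * (1 + c n * t ^ 2) ^ 2 := by ring
    exact key
  -- expansion of the error term
  have key_exp : ∀ n : ℕ,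
      T.comp (T.star' (a - T.comp a (u n))) (a - T.comp a (u n)) = cfcₙ (gn n) h := by
    intro n
    have hustar : T.star' (u n) = u n := (hu_sa n).star_eq
    have c_id : ContinuousOn (fun t : ℝ => t) (quasispectrum ℝ h) := continuous_id.continuousOn
    have c_f : ContinuousOn (fn n) (quasispectrum ℝ h) := (hfn_cont n).continuousOn
    have c_tf : ContinuousOn (fun t : ℝ => t * fn n t) (quasispectrum ℝ h) :=
      (continuous_id.mul (hfn_cont n)).continuousOn
    have c_ft : ContinuousOn (fun t : ℝ => fn n t * t) (quasispectrum ℝ h) :=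
      ((hfn_cont n).mul continuous_id).continuousOn
    have c_ftf : ContinuousOn (fun t : ℝ => fn n t * (t * fn n t)) (quasispectrum ℝ h) :=
      ((hfn_cont n).mul (continuous_id.mul (hfn_cont n))).continuousOn
    have e1 : cfcₙ (fun t : ℝ => t) h = h := cfcₙ_id' ℝ h
    have e2 : cfcₙ (fun t : ℝ => t * fn n t) h = h * u n := by
      rw [cfcₙ_mul (fun t : ℝ => t) (fn n) h c_id (by simp) c_f (hfn0 n), e1]
    have e3 : cfcₙ (fun t : ℝ => fn n t * t) h = u n * h := by
      rw [cfcₙ_mul (fn n) (fun t : ℝ => t) h c_f (hfn0 n) c_id (by simp), e1]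
    have e4 : cfcₙ (fun t : ℝ => fn n t * (t * fn n t)) h = u n * (h * u n) := by
      rw [cfcₙ_mul (fn n) (fun t : ℝ => t * fn n t) h c_f (hfn0 n) c_tf
        (by simp [hfn0 n]), e2]
    have hgeq : gn n = fun t : ℝ =>
        (t - t * fn n t) - (fn n t * t - fn n t * (t * fn n t)) := by
      funext t; simp only [hgn, hfn]; ring
    have hR : cfcₙ (gn n) h = h - h * u n - (u n * h - u n * (h * u n)) := by
      rw [hgeq]
      rw [cfcₙ_sub (fun t : ℝ => t - t * fn n t)
        (fun t : ℝ => fn n t * t - fn n t * (t * fn n t)) h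
        (c_id.sub c_tf) (by simp [hfn0 n]) (c_ft.sub c_ftf) (by simp [hfn0 n])]
      rw [cfcₙ_sub (fun t : ℝ => t) (fun t : ℝ => t * fn n t) h
        c_id (by simp) c_tf (by simp [hfn0 n])]
      rw [cfcₙ_sub (fun t : ℝ => fn n t * t) (fun t : ℝ => fn n t * (t * fn n t)) h
        c_ft (by simp [hfn0 n]) c_ftf (by simp [hfn0 n])]
      rw [e1, e2, e3, e4]
    rw [hR]
    have hL : T.comp (T.star' (a - T.comp a (u n))) (a - T.comp a (u n))
        = h - h * u n - (u n * h - u n * (h * u n)) := by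
      rw [T.star'_sub, T.star_comp', hustar, T.sub_comp, T.comp_sub, T.comp_sub]
      rw [← T.comp_assoc (T.star' a) a (u n)]
      rw [T.comp_assoc (u n) (T.star' a) a]
      rw [T.comp_assoc (u n) (T.star' a) (T.comp a (u n))]
      rw [← T.comp_assoc (T.star' a) a (u n)]
      rfl
    exact hL
  -- norm estimate
  have hnorm : ∀ n : ℕ, ‖a - T.comp a (u n)‖ ^ 2 ≤ 1 / (2 * Real.sqrt (c n)) := by
    intro n
    rw [← T.norm_star_comp_self, key_exp n]
    exact norm_cfcₙ_le fun x _ => by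
      rw [Real.norm_eq_abs]; exact hgn_bound n x
  -- the limit
  have hterm : ∀ n : ℕ, T.comp (u n) (T.star' a) - T.star' a
      = -(T.star' (a - T.comp a (u n))) := by
    intro n
    have hustar : T.star' (u n) = u n := (hu_sa n).star_eq
    rw [T.star'_sub, T.star_comp', hustar]
    abel
  have hb : Tendsto (fun n : ℕ => 1 / (2 * Real.sqrt (c n))) atTop (𝓝 0) := by
    have h1 : Tendsto (fun n : ℕ => c n) atTop atTop := by
      have := tendsto_natCast_atTop_atTop (R := ℝ)
      exact tendsto_atTop_add_const_right atTop 1 this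
    have hsq : Tendsto (fun n : ℕ => Real.sqrt (c n)) atTop atTop := by
      have hr : Tendsto (fun x : ℝ => Real.sqrt x) atTop atTop := by
        simp only [Real.sqrt_eq_rpow]
        exact tendsto_rpow_atTop (by norm_num)
      exact hr.comp h1
    have h3 : Tendsto (fun n : ℕ => 2 * Real.sqrt (c n)) atTop atTop :=
      hsq.const_mul_atTop two_pos
    simp only [one_div]; exact h3.inv_tendsto_atTop
  have hsn : Tendsto (fun n : ℕ => ‖a - T.comp a (u n)‖) atTop (𝓝 0) := by
    have hbd : ∀ n : ℕ, ‖a - T.comp a (u n)‖ ≤ Real.sqrt (1 / (2 * Real.sqrt (c n))) := by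
      intro n
      have := Real.sqrt_le_sqrt (hnorm n)
      rwa [Real.sqrt_sq (norm_nonneg _)] at this
    have hsb : Tendsto (fun n : ℕ => Real.sqrt (1 / (2 * Real.sqrt (c n)))) atTop (𝓝 0) := by
      have := (Real.continuous_sqrt.tendsto' 0 0 Real.sqrt_zero).comp hb
      exact this
    exact squeeze_zero (fun n => norm_nonneg _) hbd hsb
  have hlim : Tendsto (fun n : ℕ => T.comp (u n) (T.star' a)) atTop (𝓝 (T.star' a)) := by
    rw [tendsto_iff_norm_sub_tendsto_zero]
    have heq : ∀ n : ℕ, ‖T.comp (u n) (T.star' a) - T.star' a‖ = ‖a - T.comp a (u n)‖ := by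
      intro n
      rw [hterm n, norm_neg, T.norm_star']
    simp only [heq]
    exact hsn
  have hmem : ∀ n : ℕ, T.comp (u n) (T.star' a) ∈ K.car ρ σ :=
    fun n => K.comp_mem_right _ (hu_mem n)
  exact (K.isClosed' ρ σ).mem_of_tendsto hlim (Filter.Eventually.of_forall hmem)

end CstarPrecat
section FinsetHelpers

open Finset

variable {M : Type*} [AddCommMonoid M]

lemma sum_Ico_eq_sum_range' (f : ℕ → M) (m n : ℕ) :
    ∑ i ∈ Finset.Ico m n, f i = ∑ i ∈ Finset.range (n - m), f (i + m) := by
  rw [Finset.sum_Ico_eq_sum_range]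
  exact Finset.sum_congr rfl fun i _ => by rw [Nat.add_comm]

lemma tri_comm (N : ℕ) (f : ℕ → ℕ → M) :
    ∑ k ∈ range N, ∑ p ∈ range (N - k), f k p
      = ∑ p ∈ range N, ∑ k ∈ range (N - p), f k p := by
  have h1 : ∀ k : ℕ, Finset.range (N - k) = (Finset.range N).filter (fun p => k + p < N) := by
    intro k; ext p; simp only [mem_range, mem_filter]; omega
  calc ∑ k ∈ range N, ∑ p ∈ range (N - k), f k p
      = ∑ k ∈ range N, ∑ p ∈ range N, if k + p < N then f k p else 0 := by
        refine Finset.sum_congr rfl fun k _ => ?_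
        rw [h1 k, Finset.sum_filter]
    _ = ∑ p ∈ range N, ∑ k ∈ range N, if k + p < N then f k p else 0 := Finset.sum_comm
    _ = ∑ p ∈ range N, ∑ k ∈ range (N - p), f k p := by
        refine Finset.sum_congr rfl fun p _ => ?_
        rw [h1 p, Finset.sum_filter]
        exact Finset.sum_congr rfl fun k _ => by rw [Nat.add_comm k p]

lemma tri_comm' (N : ℕ) (f : ℕ → ℕ → M) :
    ∑ k ∈ range N, ∑ s ∈ range (N - (k + 1)), f k s
      = ∑ s ∈ range N, ∑ k ∈ range (N - (s + 1)), f k s := by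
  have key : ∀ g : ℕ → ℕ → M,
      ∑ k ∈ range N, ∑ s ∈ range (N - (k + 1)), g k s
        = ∑ k ∈ range (N - 1), ∑ s ∈ range ((N - 1) - k), g k s := by
    intro g
    rw [← Finset.sum_subset (Finset.range_subset_range.mpr (Nat.sub_le N 1))]
    · refine Finset.sum_congr rfl fun k _ => ?_
      have : N - (k + 1) = (N - 1) - k := by omega
      rw [this]
    · intro k hk hk'
      simp only [mem_range] at hk hk'
      have : N - (k + 1) = 0 := by omega
      rw [this]
      simp
  rw [key f, tri_comm (N - 1) f, ← key (fun s k => f k s)]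

lemma tri_reflect (N : ℕ) (f : ℕ → ℕ → M) :
    ∑ k ∈ range N, ∑ p ∈ range (N - k), f k p
      = ∑ j ∈ range N, ∑ p ∈ range (j + 1), f (j - p) p := by
  rw [tri_comm]
  calc ∑ p ∈ range N, ∑ k ∈ range (N - p), f k p
      = ∑ p ∈ range N, ∑ j ∈ Finset.Ico p N, f (j - p) p := by
        refine Finset.sum_congr rfl fun p _ => ?_
        rw [sum_Ico_eq_sum_range' (fun j => f (j - p) p) p N]
        exact Finset.sum_congr rfl fun k _ => by rw [Nat.add_sub_cancel]
    _ = ∑ p ∈ range N, ∑ j ∈ range N, if p ≤ j then f (j - p) p else 0 := by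
        refine Finset.sum_congr rfl fun p _ => ?_
        have h1 : Finset.Ico p N = (Finset.range N).filter (fun j => p ≤ j) := by
          ext j; simp only [mem_range, mem_filter, mem_Ico]; omega
        rw [h1, Finset.sum_filter]
    _ = ∑ j ∈ range N, ∑ p ∈ range N, if p ≤ j then f (j - p) p else 0 := Finset.sum_comm
    _ = ∑ j ∈ range N, ∑ p ∈ range (j + 1), f (j - p) p := by
        refine Finset.sum_congr rfl fun j hj => ?_
        simp only [mem_range] at hj
        have h1 : Finset.range (j + 1) = (Finset.range N).filter (fun p => p ≤ j) := by
          ext p; simp only [mem_range, mem_filter]; omega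
        rw [h1, Finset.sum_filter]

end FinsetHelpers
namespace RTCP

open Finset

variable (T : RTCP)

lemma tensor_zero {n m : ℕ} : T.tensor (0 : T.Hom n m) = 0 := by
  have h := T.tensor_smul 0 (0 : T.Hom n m)
  simpa using h

lemma tensorPow_zero (k : ℕ) {n m : ℕ} : T.tensorPow k (0 : T.Hom n m) = 0 := by
  induction k with
  | zero => rfl
  | succ k ih =>
      show T.tensor (T.tensorPow k (0 : T.Hom n m)) = 0
      rw [ih, T.tensor_zero]

lemma tensorPow_star (k : ℕ) {n m : ℕ} (a : T.Hom n m) :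
    T.tensorPow k (T.toCstarPrecat.star' a) = T.toCstarPrecat.star' (T.tensorPow k a) := by
  induction k with
  | zero => rfl
  | succ k ih =>
      show T.tensor (T.tensorPow k (T.toCstarPrecat.star' a)) = _
      rw [ih, T.tensor_star]
      rfl

lemma comp_sum {ι : Type*} {σ ρ τ : ℕ} (a : T.Hom σ ρ) (s : Finset ι)
    (g : ι → T.Hom τ σ) :
    T.comp a (∑ i ∈ s, g i) = ∑ i ∈ s, T.comp a (g i) := by
  classical
  induction s using Finset.cons_induction with
  | empty => simpa using T.comp_zero a
  | cons i s his ih => rw [Finset.sum_cons, Finset.sum_cons, T.comp_add, ih]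

lemma sum_comp {ι : Type*} {σ ρ τ : ℕ} (b : T.Hom τ σ) (s : Finset ι)
    (g : ι → T.Hom σ ρ) :
    T.comp (∑ i ∈ s, g i) b = ∑ i ∈ s, T.comp (g i) b := by
  classical
  induction s using Finset.cons_induction with
  | empty => simpa using T.zero_comp b
  | cons i s his ih => rw [Finset.sum_cons, Finset.sum_cons, T.add_comp, ih]

variable {b : T.MatSpace}

lemma lam_zero_left (a : T.MatSpace) (m : ℕ) : T.lam a 0 m = 0 := rfl

lemma lam_zero_right (a : T.MatSpace) (n : ℕ) : T.lam a (n + 1) 0 = 0 := rfl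

lemma lam_succ (a : T.MatSpace) (n m : ℕ) :
    T.lam a (n + 1) (m + 1) = T.tensor (a n m) := rfl

lemma lamPow_apply (a : T.MatSpace) (k p q : ℕ) :
    T.lamPow k a (p + k) (q + k) = T.tensorPow k (a p q) := by
  induction k with
  | zero => rfl
  | succ k ih =>
      show T.lam (T.lamPow k a) (p + k + 1) (q + k + 1) = _
      rw [T.lam_succ, ih]
      rfl

lemma lamPow_eq_zero (a : T.MatSpace) (k n m : ℕ) (h : n < k ∨ m < k) :
    T.lamPow k a n m = 0 := by
  induction k generalizing n m with
  | zero => omega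
  | succ k ih =>
      match n, m with
      | 0, m => rfl
      | n + 1, 0 => rfl
      | n + 1, m + 1 =>
          show T.tensor (T.lamPow k a n m) = 0
          rw [ih n m (by omega), T.tensor_zero]

lemma lamPow_supp (a : T.MatSpace) {N : ℕ} (hA : ∀ n m, N ≤ n ∨ N ≤ m → a n m = 0)
    (k n m : ℕ) (h : N + k ≤ n ∨ N + k ≤ m) : T.lamPow k a n m = 0 := by
  by_cases hnm : n < k ∨ m < k
  · exact T.lamPow_eq_zero a k n m hnm
  · push_neg at hnm
    obtain ⟨p, rfl⟩ : ∃ p, n = p + k := ⟨n - k, by omega⟩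
    obtain ⟨q, rfl⟩ : ∃ q, m = q + k := ⟨m - k, by omega⟩
    rw [T.lamPow_apply, hA p q (by omega), T.tensorPow_zero]

/-- A bound beyond which a finitely supported matrix vanishes. -/
lemma IsMat.exists_bound {T : RTCP} {K : T.Ideal} {a : T.MatSpace} (ha : T.IsMat K a) :
    ∃ N : ℕ, ∀ n m, N ≤ n ∨ N ≤ m → a n m = 0 := by
  classical
  refine ⟨(ha.2.toFinset.sup fun p => max p.1 p.2) + 1, fun n m h => ?_⟩
  by_contra hne
  have hmem : (n, m) ∈ ha.2.toFinset := by
    rw [Set.Finite.mem_toFinset]; exact hne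
  have := Finset.le_sup (f := fun p : ℕ × ℕ => max p.1 p.2) hmem
  simp only [max_le_iff] at this
  omega

end RTCP

namespace RTRep

open Finset

variable {T : RTCP} {K : T.Ideal} {B : Type} [NonUnitalCStarAlgebra B] (π : RTRep T K B)

lemma map_zero' (n m : ℕ) : π.map n m 0 = 0 := by
  have h := π.map_smul (n := n) (m := m) 0 (K.car m n).zero_mem
  simpa using h

lemma map_sum {ι : Type*} (n m : ℕ) (s : Finset ι) (f : ι → T.Hom m n)
    (hf : ∀ i ∈ s, f i ∈ K.car m n) :
    π.map n m (∑ i ∈ s, f i) = ∑ i ∈ s, π.map n m (f i) := by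
  classical
  induction s using Finset.cons_induction with
  | empty => simpa using π.map_zero' n m
  | cons i s his ih =>
      rw [Finset.sum_cons, Finset.sum_cons,
        π.map_add (hf i (Finset.mem_cons_self i s))
          ((K.car m n).sum_mem fun j hj => hf j (Finset.mem_cons_of_mem hj)),
        ih fun j hj => hf j (Finset.mem_cons_of_mem hj)]

/-- The mirror of `map_rt`, with the tensor power on the right factor. -/
lemma map_rt' {n p q : ℕ} (k : ℕ) {x : T.Hom (p + k) n} {y : T.Hom q p}
    (hx : x ∈ K.car (p + k) n) (hy : y ∈ K.car q p) :
    π.map n (p + k) x * π.map p q y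
      = π.map n (q + k) (T.comp x (T.tensorPow k y)) := by
  have hyK : T.toCstarPrecat.star' y ∈ K.car p q := K.star_mem hy
  have hxK : T.toCstarPrecat.star' x ∈ K.car n (p + k) := K.star_mem hx
  have h1 := π.map_rt (n := q) (m := p) (l := n) k hyK hxK
  have hmem : T.comp x (T.tensorPow k y) ∈ K.car (q + k) n :=
    K.comp_mem_right _ hx
  apply star_injective
  rw [star_mul, π.map_star hx, π.map_star hy, h1, π.map_star hmem]
  congr 1
  rw [T.toCstarPrecat.star_comp', T.tensorPow_star]

end RTRep
namespace RTRep

open Finset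

variable {T : RTCP} {K : T.Ideal} {B : Type} [NonUnitalCStarAlgebra B] (π : RTRep T K B)

lemma Psi_eq_sum (a : T.MatSpace) (N : ℕ)
    (h0 : ∀ n m, N ≤ n ∨ N ≤ m → a n m = 0) :
    π.Psi a = ∑ n ∈ range N, ∑ m ∈ range N, π.map n m (a n m) := by
  have hinner : ∀ n, ∑ᶠ m, π.map n m (a n m) = ∑ m ∈ range N, π.map n m (a n m) := by
    intro n
    apply finsum_eq_sum_of_support_subset
    intro m hm
    simp only [Function.mem_support] at hm
    simp only [coe_range, Set.mem_Iio]
    by_contra h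
    exact hm (by rw [h0 n m (Or.inr (by omega))]; exact π.map_zero' n m)
  rw [Psi, finsum_congr hinner]
  apply finsum_eq_sum_of_support_subset
  intro n hn
  simp only [Function.mem_support] at hn
  simp only [coe_range, Set.mem_Iio]
  by_contra h
  refine hn (Finset.sum_eq_zero fun m _ => ?_)
  rw [h0 n m (Or.inl (by omega))]
  exact π.map_zero' n m

lemma Psi_add {a b : T.MatSpace} (ha : T.IsMat K a) (hb : T.IsMat K b) :
    π.Psi (a + b) = π.Psi a + π.Psi b := by
  obtain ⟨Na, hNa⟩ := ha.exists_bound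
  obtain ⟨Nb, hNb⟩ := hb.exists_bound
  set N := max Na Nb with hN
  have hA : ∀ n m, N ≤ n ∨ N ≤ m → a n m = 0 := fun n m h => hNa n m (by omega)
  have hB : ∀ n m, N ≤ n ∨ N ≤ m → b n m = 0 := fun n m h => hNb n m (by omega)
  have hAB : ∀ n m, N ≤ n ∨ N ≤ m → (a + b) n m = 0 := fun n m h => by
    show a n m + b n m = 0
    rw [hA n m h, hB n m h, add_zero]
  rw [π.Psi_eq_sum (a + b) N hAB, π.Psi_eq_sum a N hA, π.Psi_eq_sum b N hB,
    ← Finset.sum_add_distrib]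
  refine Finset.sum_congr rfl fun n _ => ?_
  rw [← Finset.sum_add_distrib]
  exact Finset.sum_congr rfl fun m _ => π.map_add (ha.1 n m) (hb.1 n m)

lemma Psi_smul (z : ℂ) {a : T.MatSpace} (ha : T.IsMat K a) :
    π.Psi (z • a) = z • π.Psi a := by
  obtain ⟨N, hA⟩ := ha.exists_bound
  have hZ : ∀ n m, N ≤ n ∨ N ≤ m → (z • a) n m = 0 := fun n m h => by
    show z • a n m = 0
    rw [hA n m h, smul_zero]
  rw [π.Psi_eq_sum (z • a) N hZ, π.Psi_eq_sum a N hA, Finset.smul_sum]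
  refine Finset.sum_congr rfl fun n _ => ?_
  rw [Finset.smul_sum]
  exact Finset.sum_congr rfl fun m _ => π.map_smul z (ha.1 n m)

lemma Psi_star {a : T.MatSpace} (ha : T.IsMat K a) :
    π.Psi (T.mstar a) = star (π.Psi a) := by
  obtain ⟨N, hA⟩ := ha.exists_bound
  have hS : ∀ n m, N ≤ n ∨ N ≤ m → T.mstar a n m = 0 := fun n m h => by
    show T.toCstarPrecat.star' (a m n) = 0
    rw [hA m n (by omega), T.toCstarPrecat.star'_zero]
  rw [π.Psi_eq_sum (T.mstar a) N hS, π.Psi_eq_sum a N hA]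
  calc ∑ n ∈ range N, ∑ m ∈ range N, π.map n m (T.mstar a n m)
      = ∑ n ∈ range N, ∑ m ∈ range N, star (π.map m n (a m n)) := by
        refine Finset.sum_congr rfl fun n _ => Finset.sum_congr rfl fun m _ => ?_
        exact (π.map_star (ha.1 m n)).symm
    _ = star (∑ n ∈ range N, ∑ m ∈ range N, π.map m n (a m n)) := by
        rw [star_sum]
        exact Finset.sum_congr rfl fun n _ => by rw [star_sum]
    _ = star (∑ n ∈ range N, ∑ m ∈ range N, π.map n m (a n m)) := by
        rw [Finset.sum_comm]

end RTRep
namespace RTRep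

open Finset

variable {T : RTCP} {K : T.Ideal} {B : Type} [NonUnitalCStarAlgebra B] (π : RTRep T K B)

lemma Psi_mul {a b : T.MatSpace} (ha : T.IsMat K a) (hb : T.IsMat K b) :
    π.Psi (T.conv a b) = π.Psi a * π.Psi b := by
  classical
  obtain ⟨Na, hNa⟩ := ha.exists_bound
  obtain ⟨Nb, hNb⟩ := hb.exists_bound
  set N := max Na Nb with hNdef
  have hA : ∀ n m, N ≤ n ∨ N ≤ m → a n m = 0 := fun n m h => hNa n m (by omega)
  have hB : ∀ n m, N ≤ n ∨ N ≤ m → b n m = 0 := fun n m h => hNb n m (by omega)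
  -- the entries of the convolution as finite double sums
  have hLb : ∀ j m, j < N →
      (∑ᶠ k, T.lamPow k b j m) = ∑ k ∈ range N, T.lamPow k b j m := by
    intro j m hj
    apply finsum_eq_sum_of_support_subset
    intro k hk
    simp only [Function.mem_support] at hk
    simp only [coe_range, Set.mem_Iio]
    by_contra h
    exact hk (T.lamPow_eq_zero b k j m (Or.inl (by omega)))
  have hLa : ∀ n j, j < N →
      (∑ᶠ k, T.lamPow (k + 1) a n j) = ∑ k ∈ range N, T.lamPow (k + 1) a n j := by
    intro n j hj
    apply finsum_eq_sum_of_support_subset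
    intro k hk
    simp only [Function.mem_support] at hk
    simp only [coe_range, Set.mem_Iio]
    by_contra h
    exact hk (T.lamPow_eq_zero a (k + 1) n j (Or.inr (by omega)))
  have hentry : ∀ n m, T.conv a b n m
      = (∑ j ∈ range N, ∑ k ∈ range N, T.comp (a n j) (T.lamPow k b j m))
        + (∑ j ∈ range N, ∑ k ∈ range N, T.comp (T.lamPow (k + 1) a n j) (b j m)) := by
    intro n m
    have hrfl : T.conv a b n m
        = T.matMul a (fun j m' => ∑ᶠ k, T.lamPow k b j m') n m
          + T.matMul (fun n' j => ∑ᶠ k, T.lamPow (k + 1) a n' j) b n m := rfl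
    have hM1 : T.matMul a (fun j m' => ∑ᶠ k, T.lamPow k b j m') n m
        = ∑ j ∈ range N, ∑ k ∈ range N, T.comp (a n j) (T.lamPow k b j m) := by
      have h1 : T.matMul a (fun j m' => ∑ᶠ k, T.lamPow k b j m') n m
          = ∑ j ∈ range N, T.comp (a n j) (∑ᶠ k, T.lamPow k b j m) := by
        apply finsum_eq_sum_of_support_subset
        intro j hj
        simp only [Function.mem_support] at hj
        simp only [coe_range, Set.mem_Iio]
        by_contra h
        exact hj (by
          rw [hA n j (Or.inr (by omega))]
          exact T.toCstarPrecat.zero_comp _)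
      rw [h1]
      refine Finset.sum_congr rfl fun j hj => ?_
      rw [hLb j m (mem_range.mp hj), T.comp_sum]
    have hM2 : T.matMul (fun n' j => ∑ᶠ k, T.lamPow (k + 1) a n' j) b n m
        = ∑ j ∈ range N, ∑ k ∈ range N, T.comp (T.lamPow (k + 1) a n j) (b j m) := by
      have h1 : T.matMul (fun n' j => ∑ᶠ k, T.lamPow (k + 1) a n' j) b n m
          = ∑ j ∈ range N, T.comp (∑ᶠ k, T.lamPow (k + 1) a n j) (b j m) := by
        apply finsum_eq_sum_of_support_subset
        intro j hj
        simp only [Function.mem_support] at hj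
        simp only [coe_range, Set.mem_Iio]
        by_contra h
        exact hj (by
          rw [hB j m (Or.inl (by omega))]
          exact T.toCstarPrecat.comp_zero _)
      rw [h1]
      refine Finset.sum_congr rfl fun j hj => ?_
      rw [hLa n j (mem_range.mp hj), T.sum_comp]
    rw [hrfl, hM1, hM2]
  have mem1 : ∀ n m j k, T.comp (a n j) (T.lamPow k b j m) ∈ K.car m n :=
    fun n m j k => K.comp_mem_right _ (ha.1 n j)
  have mem2 : ∀ n m j k, T.comp (T.lamPow (k + 1) a n j) (b j m) ∈ K.car m n :=
    fun n m j k => K.comp_mem_left _ (hb.1 j m)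
  have hconv0 : ∀ n m, 2 * N ≤ n ∨ 2 * N ≤ m → T.conv a b n m = 0 := by
    intro n m h
    rw [hentry n m]
    rcases h with hn | hm
    · have e1 : (∑ j ∈ range N, ∑ k ∈ range N, T.comp (a n j) (T.lamPow k b j m)) = 0 :=
        Finset.sum_eq_zero fun j _ => Finset.sum_eq_zero fun k _ => by
          rw [hA n j (Or.inl (by omega))]
          exact T.toCstarPrecat.zero_comp _
      have e2 : (∑ j ∈ range N, ∑ k ∈ range N,
          T.comp (T.lamPow (k + 1) a n j) (b j m)) = 0 :=
        Finset.sum_eq_zero fun j _ => Finset.sum_eq_zero fun k hk => by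
          simp only [mem_range] at hk
          rw [T.lamPow_supp a hA (k + 1) n j (Or.inl (by omega))]
          exact T.toCstarPrecat.zero_comp _
      rw [e1, e2, add_zero]
    · have e1 : (∑ j ∈ range N, ∑ k ∈ range N, T.comp (a n j) (T.lamPow k b j m)) = 0 :=
        Finset.sum_eq_zero fun j _ => Finset.sum_eq_zero fun k hk => by
          simp only [mem_range] at hk
          rw [T.lamPow_supp b hB k j m (Or.inr (by omega))]
          exact T.toCstarPrecat.comp_zero _
      have e2 : (∑ j ∈ range N, ∑ k ∈ range N,
          T.comp (T.lamPow (k + 1) a n j) (b j m)) = 0 :=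
        Finset.sum_eq_zero fun j _ => Finset.sum_eq_zero fun k _ => by
          rw [hB j m (Or.inr (by omega))]
          exact T.toCstarPrecat.comp_zero _
      rw [e1, e2, add_zero]
  -- split `Psi` of the convolution in two quadruple sums
  have hsplit : π.Psi (T.conv a b)
      = (∑ n ∈ range (2 * N), ∑ m ∈ range (2 * N), ∑ j ∈ range N, ∑ k ∈ range N,
          π.map n m (T.comp (a n j) (T.lamPow k b j m)))
        + (∑ n ∈ range (2 * N), ∑ m ∈ range (2 * N), ∑ j ∈ range N, ∑ k ∈ range N,
          π.map n m (T.comp (T.lamPow (k + 1) a n j) (b j m))) := by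
    rw [π.Psi_eq_sum (T.conv a b) (2 * N) hconv0, ← Finset.sum_add_distrib]
    refine Finset.sum_congr rfl fun n _ => ?_
    rw [← Finset.sum_add_distrib]
    refine Finset.sum_congr rfl fun m _ => ?_
    have hs1 : (∑ j ∈ range N, ∑ k ∈ range N, T.comp (a n j) (T.lamPow k b j m))
        ∈ K.car m n :=
      (K.car m n).sum_mem fun j _ => (K.car m n).sum_mem fun k _ => mem1 n m j k
    have hs2 : (∑ j ∈ range N, ∑ k ∈ range N, T.comp (T.lamPow (k + 1) a n j) (b j m))
        ∈ K.car m n :=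
      (K.car m n).sum_mem fun j _ => (K.car m n).sum_mem fun k _ => mem2 n m j k
    rw [hentry n m, π.map_add hs1 hs2]
    congr 1
    · rw [π.map_sum n m _ _ fun j _ => (K.car m n).sum_mem fun k _ => mem1 n m j k]
      exact Finset.sum_congr rfl fun j _ => π.map_sum n m _ _ fun k _ => mem1 n m j k
    · rw [π.map_sum n m _ _ fun j _ => (K.car m n).sum_mem fun k _ => mem2 n m j k]
      exact Finset.sum_congr rfl fun j _ => π.map_sum n m _ _ fun k _ => mem2 n m j k
  -- the generic restriction principle
  have step1 : ∀ (M M' : ℕ) (f : ℕ → B), M ≤ M' → (∀ n, M ≤ n → f n = 0) →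
      ∑ n ∈ range M', f n = ∑ n ∈ range M, f n := by
    intro M M' f hMM' hf
    exact (Finset.sum_subset (Finset.range_subset_range.mpr hMM')
      fun x _ hx' => hf x (by simpa using hx')).symm
  -- transformation of the first quadruple sum
  have hT1 : (∑ n ∈ range (2 * N), ∑ m ∈ range (2 * N), ∑ j ∈ range N, ∑ k ∈ range N,
        π.map n m (T.comp (a n j) (T.lamPow k b j m)))
      = ∑ n ∈ range N, ∑ j ∈ range N, ∑ p ∈ range (j + 1), ∑ q ∈ range N,
        π.map n j (a n j) * π.map p q (b p q) := by
    calc (∑ n ∈ range (2 * N), ∑ m ∈ range (2 * N), ∑ j ∈ range N, ∑ k ∈ range N,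
        π.map n m (T.comp (a n j) (T.lamPow k b j m)))
        = ∑ n ∈ range N, ∑ m ∈ range (2 * N), ∑ j ∈ range N, ∑ k ∈ range N,
            π.map n m (T.comp (a n j) (T.lamPow k b j m)) := by
          refine step1 N (2 * N) _ (by omega) fun n hn => ?_
          refine Finset.sum_eq_zero fun m _ => Finset.sum_eq_zero fun j _ =>
            Finset.sum_eq_zero fun k _ => ?_
          rw [hA n j (Or.inl hn), T.toCstarPrecat.zero_comp]
          exact π.map_zero' n m
      _ = ∑ n ∈ range N, ∑ j ∈ range N, ∑ k ∈ range N, ∑ m ∈ range (2 * N),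
            π.map n m (T.comp (a n j) (T.lamPow k b j m)) := by
          refine Finset.sum_congr rfl fun n _ => ?_
          rw [Finset.sum_comm]
          exact Finset.sum_congr rfl fun j _ => Finset.sum_comm
      _ = ∑ n ∈ range N, ∑ j ∈ range N, ∑ k ∈ range N, ∑ q ∈ range N,
            π.map n (q + k) (T.comp (a n j) (T.lamPow k b j (q + k))) := by
          refine Finset.sum_congr rfl fun n _ => Finset.sum_congr rfl fun j _ =>
            Finset.sum_congr rfl fun k hk => ?_
          simp only [mem_range] at hk
          have hzero : ∀ m ∈ range (2 * N), m ∉ Finset.Ico k (N + k) →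
              π.map n m (T.comp (a n j) (T.lamPow k b j m)) = 0 := by
            intro m _ hm'
            simp only [mem_Ico, not_and_or, not_le, not_lt] at hm'
            rcases hm' with h | h
            · rw [T.lamPow_eq_zero b k j m (Or.inr h), T.toCstarPrecat.comp_zero]
              exact π.map_zero' n m
            · rw [T.lamPow_supp b hB k j m (Or.inr (by omega)), T.toCstarPrecat.comp_zero]
              exact π.map_zero' n m
          rw [← Finset.sum_subset (show Finset.Ico k (N + k) ⊆ range (2 * N) by
            intro x hx; simp only [mem_Ico] at hx; simp only [mem_range]; omega) hzero]
          rw [sum_Ico_eq_sum_range'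
            (fun m => π.map n m (T.comp (a n j) (T.lamPow k b j m))) k (N + k)]
          have hNk : N + k - k = N := by omega
          rw [hNk]
      _ = ∑ n ∈ range N, ∑ k ∈ range N, ∑ p ∈ range (N - k), ∑ q ∈ range N,
            π.map n (q + k) (T.comp (a n (p + k)) (T.lamPow k b (p + k) (q + k))) := by
          refine Finset.sum_congr rfl fun n _ => ?_
          rw [Finset.sum_comm]
          refine Finset.sum_congr rfl fun k hk => ?_
          have hzero : ∀ j ∈ range N, j ∉ Finset.Ico k N →
              (∑ q ∈ range N,
                π.map n (q + k) (T.comp (a n j) (T.lamPow k b j (q + k)))) = 0 := by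
            intro j hj hj'
            simp only [mem_range] at hj
            simp only [mem_Ico, not_and_or, not_le, not_lt] at hj'
            rcases hj' with h | h
            · refine Finset.sum_eq_zero fun q _ => ?_
              rw [T.lamPow_eq_zero b k j (q + k) (Or.inl h), T.toCstarPrecat.comp_zero]
              exact π.map_zero' _ _
            · omega
          rw [← Finset.sum_subset (show Finset.Ico k N ⊆ range N by
            intro x hx; simp only [mem_Ico] at hx; simp only [mem_range]; omega) hzero]
          rw [sum_Ico_eq_sum_range'
            (fun j => ∑ q ∈ range N,
              π.map n (q + k) (T.comp (a n j) (T.lamPow k b j (q + k)))) k N]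
      _ = ∑ n ∈ range N, ∑ k ∈ range N, ∑ p ∈ range (N - k), ∑ q ∈ range N,
            π.map n (p + k) (a n (p + k)) * π.map p q (b p q) := by
          refine Finset.sum_congr rfl fun n _ => Finset.sum_congr rfl fun k _ =>
            Finset.sum_congr rfl fun p _ => Finset.sum_congr rfl fun q _ => ?_
          rw [T.lamPow_apply b k p q]
          exact (π.map_rt' k (ha.1 n (p + k)) (hb.1 p q)).symm
      _ = ∑ n ∈ range N, ∑ j ∈ range N, ∑ p ∈ range (j + 1), ∑ q ∈ range N,
            π.map n j (a n j) * π.map p q (b p q) := by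
          refine Finset.sum_congr rfl fun n _ => ?_
          rw [tri_reflect N (fun k p => ∑ q ∈ range N,
            π.map n (p + k) (a n (p + k)) * π.map p q (b p q))]
          refine Finset.sum_congr rfl fun j hj => Finset.sum_congr rfl fun p hp => ?_
          simp only [mem_range] at hj hp
          have hpj : p + (j - p) = j := by omega
          rw [hpj]
  -- transformation of the second quadruple sum
  have hT2 : (∑ n ∈ range (2 * N), ∑ m ∈ range (2 * N), ∑ j ∈ range N, ∑ k ∈ range N,
        π.map n m (T.comp (T.lamPow (k + 1) a n j) (b j m)))
      = ∑ n ∈ range N, ∑ j ∈ range N, ∑ p ∈ Finset.Ico (j + 1) N, ∑ q ∈ range N,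
        π.map n j (a n j) * π.map p q (b p q) := by
    have hR2 : (∑ n ∈ range N, ∑ j ∈ range N, ∑ p ∈ Finset.Ico (j + 1) N, ∑ q ∈ range N,
          π.map n j (a n j) * π.map p q (b p q))
        = ∑ n ∈ range N, ∑ j ∈ range N, ∑ k ∈ range (N - (j + 1)), ∑ q ∈ range N,
          π.map n j (a n j) * π.map (k + (j + 1)) q (b (k + (j + 1)) q) := by
      refine Finset.sum_congr rfl fun n _ => Finset.sum_congr rfl fun j _ => ?_
      rw [sum_Ico_eq_sum_range'
        (fun p => ∑ q ∈ range N, π.map n j (a n j) * π.map p q (b p q)) (j + 1) N]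
    rw [hR2]
    calc (∑ n ∈ range (2 * N), ∑ m ∈ range (2 * N), ∑ j ∈ range N, ∑ k ∈ range N,
        π.map n m (T.comp (T.lamPow (k + 1) a n j) (b j m)))
        = ∑ n ∈ range (2 * N), ∑ m ∈ range N, ∑ j ∈ range N, ∑ k ∈ range N,
            π.map n m (T.comp (T.lamPow (k + 1) a n j) (b j m)) := by
          refine Finset.sum_congr rfl fun n _ => ?_
          refine step1 N (2 * N) _ (by omega) fun m hm => ?_
          refine Finset.sum_eq_zero fun j _ => Finset.sum_eq_zero fun k _ => ?_
          rw [hB j m (Or.inr hm), T.toCstarPrecat.comp_zero]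
          exact π.map_zero' n m
      _ = ∑ n ∈ range (2 * N), ∑ m ∈ range N, ∑ k ∈ range N, ∑ j ∈ range N,
            π.map n m (T.comp (T.lamPow (k + 1) a n j) (b j m)) := by
          exact Finset.sum_congr rfl fun n _ => Finset.sum_congr rfl fun m _ =>
            Finset.sum_comm
      _ = ∑ n ∈ range (2 * N), ∑ k ∈ range N, ∑ m ∈ range N, ∑ j ∈ range N,
            π.map n m (T.comp (T.lamPow (k + 1) a n j) (b j m)) := by
          exact Finset.sum_congr rfl fun n _ => Finset.sum_comm
      _ = ∑ k ∈ range N, ∑ n ∈ range (2 * N), ∑ m ∈ range N, ∑ j ∈ range N,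
            π.map n m (T.comp (T.lamPow (k + 1) a n j) (b j m)) := Finset.sum_comm
      _ = ∑ k ∈ range N, ∑ n ∈ range (2 * N), ∑ j ∈ range N, ∑ m ∈ range N,
            π.map n m (T.comp (T.lamPow (k + 1) a n j) (b j m)) := by
          exact Finset.sum_congr rfl fun k _ => Finset.sum_congr rfl fun n _ =>
            Finset.sum_comm
      _ = ∑ k ∈ range N, ∑ r ∈ range N, ∑ j ∈ range N, ∑ m ∈ range N,
            π.map (r + (k + 1)) m
              (T.comp (T.lamPow (k + 1) a (r + (k + 1)) j) (b j m)) := by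
          refine Finset.sum_congr rfl fun k hk => ?_
          simp only [mem_range] at hk
          have hzero : ∀ n ∈ range (2 * N), n ∉ Finset.Ico (k + 1) (N + (k + 1)) →
              (∑ j ∈ range N, ∑ m ∈ range N,
                π.map n m (T.comp (T.lamPow (k + 1) a n j) (b j m))) = 0 := by
            intro n _ hn'
            simp only [mem_Ico, not_and_or, not_le, not_lt] at hn'
            refine Finset.sum_eq_zero fun j _ => Finset.sum_eq_zero fun m _ => ?_
            rcases hn' with h | h
            · rw [T.lamPow_eq_zero a (k + 1) n j (Or.inl h), T.toCstarPrecat.zero_comp]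
              exact π.map_zero' _ _
            · rw [T.lamPow_supp a hA (k + 1) n j (Or.inl (by omega)),
                T.toCstarPrecat.zero_comp]
              exact π.map_zero' _ _
          rw [← Finset.sum_subset (show Finset.Ico (k + 1) (N + (k + 1)) ⊆ range (2 * N) by
            intro x hx; simp only [mem_Ico] at hx; simp only [mem_range]; omega) hzero]
          rw [sum_Ico_eq_sum_range'
            (fun n => ∑ j ∈ range N, ∑ m ∈ range N,
              π.map n m (T.comp (T.lamPow (k + 1) a n j) (b j m))) (k + 1) (N + (k + 1))]
          have hNk : N + (k + 1) - (k + 1) = N := by omega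
          rw [hNk]
      _ = ∑ k ∈ range N, ∑ r ∈ range N, ∑ s ∈ range (N - (k + 1)), ∑ m ∈ range N,
            π.map (r + (k + 1)) m
              (T.comp (T.lamPow (k + 1) a (r + (k + 1)) (s + (k + 1)))
                (b (s + (k + 1)) m)) := by
          refine Finset.sum_congr rfl fun k hk => Finset.sum_congr rfl fun r _ => ?_
          simp only [mem_range] at hk
          have hzero : ∀ j ∈ range N, j ∉ Finset.Ico (k + 1) N →
              (∑ m ∈ range N, π.map (r + (k + 1)) m
                (T.comp (T.lamPow (k + 1) a (r + (k + 1)) j) (b j m))) = 0 := by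
            intro j hj hj'
            simp only [mem_range] at hj
            simp only [mem_Ico, not_and_or, not_le, not_lt] at hj'
            rcases hj' with h | h
            · refine Finset.sum_eq_zero fun m _ => ?_
              rw [T.lamPow_eq_zero a (k + 1) (r + (k + 1)) j (Or.inr h),
                T.toCstarPrecat.zero_comp]
              exact π.map_zero' _ _
            · omega
          rw [← Finset.sum_subset (show Finset.Ico (k + 1) N ⊆ range N by
            intro x hx; simp only [mem_Ico] at hx; simp only [mem_range]; omega) hzero]
          rw [sum_Ico_eq_sum_range'
            (fun j => ∑ m ∈ range N, π.map (r + (k + 1)) m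
              (T.comp (T.lamPow (k + 1) a (r + (k + 1)) j) (b j m))) (k + 1) N]
      _ = ∑ k ∈ range N, ∑ r ∈ range N, ∑ s ∈ range (N - (k + 1)), ∑ m ∈ range N,
            π.map r s (a r s) * π.map (s + (k + 1)) m (b (s + (k + 1)) m) := by
          refine Finset.sum_congr rfl fun k _ => Finset.sum_congr rfl fun r _ =>
            Finset.sum_congr rfl fun s _ => Finset.sum_congr rfl fun m _ => ?_
          rw [T.lamPow_apply a (k + 1) r s]
          exact (π.map_rt (k + 1) (ha.1 r s) (hb.1 (s + (k + 1)) m)).symm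
      _ = ∑ k ∈ range N, ∑ s ∈ range (N - (k + 1)), ∑ r ∈ range N, ∑ m ∈ range N,
            π.map r s (a r s) * π.map (s + (k + 1)) m (b (s + (k + 1)) m) := by
          exact Finset.sum_congr rfl fun k _ => Finset.sum_comm
      _ = ∑ s ∈ range N, ∑ k ∈ range (N - (s + 1)), ∑ r ∈ range N, ∑ m ∈ range N,
            π.map r s (a r s) * π.map (s + (k + 1)) m (b (s + (k + 1)) m) := by
          exact tri_comm' N (fun k s => ∑ r ∈ range N, ∑ m ∈ range N,
            π.map r s (a r s) * π.map (s + (k + 1)) m (b (s + (k + 1)) m))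
      _ = ∑ s ∈ range N, ∑ r ∈ range N, ∑ k ∈ range (N - (s + 1)), ∑ m ∈ range N,
            π.map r s (a r s) * π.map (s + (k + 1)) m (b (s + (k + 1)) m) := by
          exact Finset.sum_congr rfl fun s _ => Finset.sum_comm
      _ = ∑ r ∈ range N, ∑ s ∈ range N, ∑ k ∈ range (N - (s + 1)), ∑ m ∈ range N,
            π.map r s (a r s) * π.map (s + (k + 1)) m (b (s + (k + 1)) m) :=
          Finset.sum_comm
      _ = ∑ n ∈ range N, ∑ j ∈ range N, ∑ k ∈ range (N - (j + 1)), ∑ q ∈ range N,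
            π.map n j (a n j) * π.map (k + (j + 1)) q (b (k + (j + 1)) q) := by
          refine Finset.sum_congr rfl fun r _ => Finset.sum_congr rfl fun s _ =>
            Finset.sum_congr rfl fun k _ => Finset.sum_congr rfl fun m _ => ?_
          have hcomm : s + (k + 1) = k + (s + 1) := by omega
          rw [hcomm]
  -- the right-hand side
  have hRHS : π.Psi a * π.Psi b
      = ∑ n ∈ range N, ∑ j ∈ range N, ∑ p ∈ range N, ∑ q ∈ range N,
          π.map n j (a n j) * π.map p q (b p q) := by
    rw [π.Psi_eq_sum a N hA, π.Psi_eq_sum b N hB, Finset.sum_mul_sum]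
    refine Finset.sum_congr rfl fun n _ => ?_
    calc (∑ p ∈ range N, (∑ j ∈ range N, π.map n j (a n j))
            * ∑ q ∈ range N, π.map p q (b p q))
        = ∑ p ∈ range N, ∑ j ∈ range N, ∑ q ∈ range N,
            π.map n j (a n j) * π.map p q (b p q) := by
          refine Finset.sum_congr rfl fun p _ => ?_
          rw [Finset.sum_mul_sum]
      _ = ∑ j ∈ range N, ∑ p ∈ range N, ∑ q ∈ range N,
            π.map n j (a n j) * π.map p q (b p q) := Finset.sum_comm
  have hsplitR : (∑ n ∈ range N, ∑ j ∈ range N, ∑ p ∈ range N, ∑ q ∈ range N,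
        π.map n j (a n j) * π.map p q (b p q))
      = (∑ n ∈ range N, ∑ j ∈ range N, ∑ p ∈ range (j + 1), ∑ q ∈ range N,
          π.map n j (a n j) * π.map p q (b p q))
        + (∑ n ∈ range N, ∑ j ∈ range N, ∑ p ∈ Finset.Ico (j + 1) N, ∑ q ∈ range N,
          π.map n j (a n j) * π.map p q (b p q)) := by
    rw [← Finset.sum_add_distrib]
    refine Finset.sum_congr rfl fun n _ => ?_
    rw [← Finset.sum_add_distrib]
    refine Finset.sum_congr rfl fun j hj => ?_
    simp only [mem_range] at hj
    exact (Finset.sum_range_add_sum_Ico _ (by omega : j + 1 ≤ N)).symm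
  rw [hsplit, hT1, hT2, hRHS, hsplitR]

end RTRep
/-- If `π` is a right tensor representation of an ideal `K` of a right
tensor C*-precategory `T` in a C*-algebra `B`, then `Ψ_π((a_nm)) = Σ_{n,m} π_nm(a_nm)`
defines a *-representation of the *-algebra `M_T(K)` in `B`: it is linear, multiplicative
with respect to the convolution `⋆`, and star-preserving. -/
theorem Psi_star_representation (T : RTCP) (K : T.Ideal) (B : CStarAlg)
    (π : RTRep T K B.carrier) :
    (∀ a b : T.MatSpace, T.IsMat K a → T.IsMat K b →
      π.Psi (a + b) = π.Psi a + π.Psi b) ∧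
    (∀ (z : ℂ) (a : T.MatSpace), T.IsMat K a → π.Psi (z • a) = z • π.Psi a) ∧
    (∀ a b : T.MatSpace, T.IsMat K a → T.IsMat K b →
      π.Psi (T.conv a b) = π.Psi a * π.Psi b) ∧
    (∀ a : T.MatSpace, T.IsMat K a → π.Psi (T.mstar a) = star (π.Psi a)) :=
  ⟨fun _ _ ha hb => π.Psi_add ha hb, fun z _ ha => π.Psi_smul z ha,
    fun _ _ ha hb => π.Psi_mul ha hb, fun _ ha => π.Psi_star ha⟩

end
end
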